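/- arXiv:2002.08341 — 11 statements merged into one kernel-verified Lean document; each statement's English description precedes it below -/
import Mathlib

section
/- Let Σ₁, Σ₂ be D×D symmetric positive definite matrices, β₁, β₂ ∈ ℝ^D, σ₁², σ₂² > 0, and for i = 1,2 let Σᵢ^f = [[Σᵢ, Σᵢβᵢ],[βᵢᵀΣᵢ, σᵢ² + βᵢᵀΣᵢβᵢ]]. Then the trace of (Σ₂^f)⁻¹ Σ₁^f equals Tr(Σ₂⁻¹Σ₁) + σ₁²/σ₂² + (β₁ − β₂)ᵀΣ₁(β₁ − β₂)/σ₂². -/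
open Matrix

/-- Joint covariance matrix `[[S, Sb],[bᵀS, s2 + bᵀSb]]`. -/
noncomputable def jointCov {D : ℕ} (S : Matrix (Fin D) (Fin D) ℝ) (b : Fin D → ℝ) (s2 : ℝ) :
    Matrix (Fin D ⊕ Unit) (Fin D ⊕ Unit) ℝ :=
  Matrix.fromBlocks S (Matrix.of fun i _ => S.mulVec b i)
    (Matrix.of fun _ j => S.vecMul b j) (Matrix.of fun _ _ => s2 + b ⬝ᵥ S.mulVec b)

/-!
The joint covariance factors as `Σᶠ = L_β · diag(Σ, σ²) · L_βᵀ` with the shear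
`L_β = [[1, 0], [βᵀ, 1]]`, and shears compose additively: `L_β₂⁻¹ L_β₁ = L_(β₁ - β₂)`.
By cyclicity of the trace, `tr((Σ₂ᶠ)⁻¹ Σ₁ᶠ) = tr(diag(Σ₂, σ₂²)⁻¹ · Σᶠ(Σ₁, β₁ - β₂, σ₁²))`,
which is read off from the two diagonal blocks.
-/

variable {m R : Type*}

section CommRing

variable [CommRing R]

def lowerShear [DecidableEq m] (b : m → R) : Matrix (m ⊕ Unit) (m ⊕ Unit) R :=
  fromBlocks 1 0 (replicateRow Unit b) 1

def blockDiagScalar (S : Matrix m m R) (s : R) : Matrix (m ⊕ Unit) (m ⊕ Unit) R :=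
  fromBlocks S 0 0 (of fun _ _ => s)

theorem lowerShear_mul_lowerShear [Fintype m] [DecidableEq m] (a b : m → R) :
    lowerShear a * lowerShear b = lowerShear (a + b) := by
  simp [lowerShear, fromBlocks_multiply, replicateRow_add, add_comm]

theorem lowerShear_zero [DecidableEq m] : lowerShear (0 : m → R) = 1 := by
  simp [lowerShear]

theorem inv_lowerShear [Fintype m] [DecidableEq m] (b : m → R) :
    (lowerShear b)⁻¹ = lowerShear (-b) :=
  inv_eq_left_inv <| by rw [lowerShear_mul_lowerShear, neg_add_cancel, lowerShear_zero]

theorem trace_blockDiagScalar_mul_fromBlocks [Fintype m] (T : Matrix m m R) (t : R)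
    (A : Matrix m m R) (B : Matrix m Unit R) (C : Matrix Unit m R) (d : Matrix Unit Unit R) :
    (blockDiagScalar T t * fromBlocks A B C d).trace = (T * A).trace + t * d () () := by
  simp [blockDiagScalar, fromBlocks_multiply, trace, Fintype.sum_sum_type, mul_apply]

end CommRing

theorem inv_blockDiagScalar [Fintype m] [DecidableEq m] [Field R] {S : Matrix m m R} {s : R}
    (hS : IsUnit S.det) (hs : s ≠ 0) : (blockDiagScalar S s)⁻¹ = blockDiagScalar S⁻¹ s⁻¹ :=
  inv_eq_left_inv <| by
    rw [blockDiagScalar, blockDiagScalar, fromBlocks_multiply, nonsing_inv_mul S hS,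
      ← fromBlocks_one]
    congr 1 <;> ext <;> simp [mul_apply, hs]

section JointCov

variable {D : ℕ}

theorem jointCov_eq_lowerShear_mul_blockDiagScalar (S : Matrix (Fin D) (Fin D) ℝ)
    (b : Fin D → ℝ) (s : ℝ) :
    jointCov S b s = lowerShear b * blockDiagScalar S s * (lowerShear b)ᵀ := by
  have hblocks : jointCov S b s = fromBlocks S (replicateCol Unit (S *ᵥ b))
      (replicateRow Unit (b ᵥ* S)) (of fun _ _ => s + b ⬝ᵥ S *ᵥ b) := rfl
  rw [hblocks, lowerShear, blockDiagScalar, fromBlocks_transpose, fromBlocks_multiply,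
    fromBlocks_multiply]
  simp only [Matrix.one_mul, Matrix.mul_one, Matrix.mul_zero, Matrix.zero_mul, add_zero,
    zero_add, transpose_one, transpose_zero, transpose_replicateRow, replicateCol_mulVec,
    replicateRow_vecMul, fromBlocks_inj, true_and]
  rw [← replicateRow_vecMul, replicateRow_mul_replicateCol, ← dotProduct_mulVec]
  ext
  simp [add_comm]

theorem trace_inv_jointCov_mul_jointCov (S T : Matrix (Fin D) (Fin D) ℝ) (a b : Fin D → ℝ)
    (s t : ℝ) :
    ((jointCov T b t)⁻¹ * jointCov S a s).trace =
      ((blockDiagScalar T t)⁻¹ * jointCov S (a - b) s).trace := by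
  have hshear : lowerShear (a - b) = lowerShear (-b) * lowerShear a := by
    rw [lowerShear_mul_lowerShear, neg_add_eq_sub]
  simp only [jointCov_eq_lowerShear_mul_blockDiagScalar, Matrix.mul_inv_rev,
    ← transpose_nonsing_inv, inv_lowerShear]
  rw [Matrix.mul_assoc, trace_mul_comm, hshear, transpose_mul]
  simp only [Matrix.mul_assoc]

end JointCov

theorem trace_inv_jointCov_mul_general {D : ℕ}
    (S1 S2 : Matrix (Fin D) (Fin D) ℝ) (b1 b2 : Fin D → ℝ) (s1 s2 : ℝ)
    (hS2 : S2.PosDef) (hs2 : 0 < s2) :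
    ((jointCov S2 b2 s2)⁻¹ * jointCov S1 b1 s1).trace =
      (S2⁻¹ * S1).trace + s1 / s2 + (b1 - b2) ⬝ᵥ S1.mulVec (b1 - b2) / s2 := by
  have hS2det : IsUnit S2.det := (isUnit_iff_isUnit_det S2).1 hS2.isUnit
  rw [trace_inv_jointCov_mul_jointCov, inv_blockDiagScalar hS2det hs2.ne', jointCov,
    trace_blockDiagScalar_mul_fromBlocks, of_apply]
  ring

theorem trace_inv_jointCov_mul {D : ℕ}
    (S1 S2 : Matrix (Fin D) (Fin D) ℝ) (b1 b2 : Fin D → ℝ) (s1 s2 : ℝ)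
    (hS1 : S1.PosDef) (hS2 : S2.PosDef) (hs1 : 0 < s1) (hs2 : 0 < s2) :
    ((jointCov S2 b2 s2)⁻¹ * jointCov S1 b1 s1).trace =
      (S2⁻¹ * S1).trace + s1 / s2 + (b1 - b2) ⬝ᵥ S1.mulVec (b1 - b2) / s2 :=
  trace_inv_jointCov_mul_general S1 S2 b1 b2 s1 s2 hS2 hs2
end

section
/- Let π₁, π₂ be centered multivariate Gaussian distributions on ℝ^{D+1} with covariances Σᵢ^f = [[Σᵢ, Σᵢβᵢ],[βᵢᵀΣᵢ, σᵢ² + βᵢᵀΣᵢβᵢ]], where Σᵢ is positive definite and σᵢ² > 0, for i = 1,2. Then KL(π₁ ‖ π₂) = KL(N(0,Σ₁) ‖ N(0,Σ₂)) + KL(N(0,σ₁²) ‖ N(0,σ₂²)) + (1/2)(β₁ − β₂)ᵀΣ₁(β₁ − β₂)/σ₂². -/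
open Matrix

/-- KL divergence between centered multivariate Gaussians `N(0, A)` and `N(0, B)`
with positive definite covariances:
`KL(N(0,A) ‖ N(0,B)) = (1/2)(log det B − log det A − d + Tr(B⁻¹A))`. -/
noncomputable def klGauss {n : Type*} [Fintype n] [DecidableEq n]
    (A B : Matrix n n ℝ) : ℝ :=
  (1 / 2) * (Real.log B.det - Real.log A.det - (Fintype.card n : ℝ) + (B⁻¹ * A).trace)

/-!
A regression covariance `[[A, A Bᵀ], [B A, C + B A Bᵀ]]` factors as `L_B · diag(A, C) · L_Bᵀ`,
where `L_B = [[1, 0], [B, 1]]` and `L_B⁻¹ = L_{-B}`. Hence its determinant is `det A · det C`, and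
for two such covariances cyclicity of the trace gives
`tr(Σ₂⁻¹ Σ₁) = tr(diag(A₂, C₂)⁻¹ · L_{B₁-B₂} diag(A₁, C₁) L_{B₁-B₂}ᵀ)`, whose diagonal blocks
contribute `tr(A₂⁻¹A₁) + tr(C₂⁻¹C₁) + tr(C₂⁻¹ (B₁-B₂) A₁ (B₁-B₂)ᵀ)`. So the Gaussian KL divergence
splits into the KL divergences of the blocks plus this cross term.
-/

namespace Matrix

theorem replicateRow_sub {ι κ α : Type*} [Sub α] (v w : κ → α) :
    replicateRow ι (v - w) = replicateRow ι v - replicateRow ι w :=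
  rfl

variable {n m R : Type*} [Fintype n] [Fintype m]

theorem trace_fromBlocks [AddCommMonoid R] (A : Matrix n n R) (B : Matrix n m R)
    (C : Matrix m n R) (D : Matrix m m R) :
    (fromBlocks A B C D).trace = A.trace + D.trace := by
  simp [trace, Fintype.sum_sum_type]

variable [DecidableEq n] [DecidableEq m] [CommRing R]

theorem inv_fromBlocks_zero₁₂_zero₂₁ (A : Matrix n n R) (C : Matrix m m R)
    (hA : IsUnit A.det) (hC : IsUnit C.det) :
    (fromBlocks A 0 0 C)⁻¹ = fromBlocks A⁻¹ 0 0 C⁻¹ := by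
  rw [inv_fromBlocks_zero₁₂_of_isUnit_iff]
  · simp
  · simp [isUnit_iff_isUnit_det, hA, hC]

def blockLowerUnit (B : Matrix m n R) : Matrix (n ⊕ m) (n ⊕ m) R :=
  fromBlocks 1 0 B 1

theorem blockLowerUnit_mul (B B' : Matrix m n R) :
    blockLowerUnit B * blockLowerUnit B' = blockLowerUnit (B + B') := by
  simp [blockLowerUnit, fromBlocks_multiply, add_comm]

theorem inv_blockLowerUnit (B : Matrix m n R) : (blockLowerUnit B)⁻¹ = blockLowerUnit (-B) :=
  inv_eq_left_inv <| by rw [blockLowerUnit_mul, neg_add_cancel, blockLowerUnit, fromBlocks_one]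

theorem det_blockLowerUnit (B : Matrix m n R) : (blockLowerUnit B).det = 1 := by
  simp [blockLowerUnit]

/-- The covariance of `(X, B X + ε)` for uncorrelated centered `X`, `ε` with covariances `A`, `C`. -/
def regressionCov (A : Matrix n n R) (B : Matrix m n R) (C : Matrix m m R) :
    Matrix (n ⊕ m) (n ⊕ m) R :=
  fromBlocks A (A * Bᵀ) (B * A) (C + B * A * Bᵀ)

theorem regressionCov_eq_blockLowerUnit_mul (A : Matrix n n R) (B : Matrix m n R)
    (C : Matrix m m R) :
    regressionCov A B C = blockLowerUnit B * fromBlocks A 0 0 C * (blockLowerUnit B)ᵀ := by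
  simp [regressionCov, blockLowerUnit, fromBlocks_transpose, fromBlocks_multiply, add_comm]

theorem det_regressionCov (A : Matrix n n R) (B : Matrix m n R) (C : Matrix m m R) :
    (regressionCov A B C).det = A.det * C.det := by
  rw [regressionCov_eq_blockLowerUnit_mul, det_mul, det_mul, det_transpose, det_blockLowerUnit,
    det_fromBlocks_zero₁₂, one_mul, mul_one]

theorem inv_regressionCov (A : Matrix n n R) (B : Matrix m n R) (C : Matrix m m R)
    (hA : IsUnit A.det) (hC : IsUnit C.det) :
    (regressionCov A B C)⁻¹ =
      (blockLowerUnit (-B))ᵀ * fromBlocks A⁻¹ 0 0 C⁻¹ * blockLowerUnit (-B) := by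
  rw [regressionCov_eq_blockLowerUnit_mul, mul_inv_rev, mul_inv_rev, ← transpose_nonsing_inv,
    inv_blockLowerUnit, inv_fromBlocks_zero₁₂_zero₂₁ A C hA hC, Matrix.mul_assoc]

theorem trace_inv_regressionCov_mul (A₁ A₂ : Matrix n n R) (B₁ B₂ : Matrix m n R)
    (C₁ C₂ : Matrix m m R) (hA₂ : IsUnit A₂.det) (hC₂ : IsUnit C₂.det) :
    ((regressionCov A₂ B₂ C₂)⁻¹ * regressionCov A₁ B₁ C₁).trace =
      (A₂⁻¹ * A₁).trace + (C₂⁻¹ * C₁).trace +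
        (C₂⁻¹ * ((B₁ - B₂) * A₁ * (B₁ - B₂)ᵀ)).trace := by
  have hshift : blockLowerUnit (-B₂) * blockLowerUnit B₁ = blockLowerUnit (B₁ - B₂) := by
    rw [blockLowerUnit_mul, neg_add_eq_sub]
  calc ((regressionCov A₂ B₂ C₂)⁻¹ * regressionCov A₁ B₁ C₁).trace
      = (fromBlocks A₂⁻¹ 0 0 C₂⁻¹ * (blockLowerUnit (-B₂) * blockLowerUnit B₁ *
          fromBlocks A₁ 0 0 C₁ * (blockLowerUnit (-B₂) * blockLowerUnit B₁)ᵀ)).trace := by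
        rw [inv_regressionCov _ _ _ hA₂ hC₂, regressionCov_eq_blockLowerUnit_mul, transpose_mul]
        simp only [Matrix.mul_assoc]
        rw [trace_mul_comm]
        simp only [Matrix.mul_assoc]
    _ = (fromBlocks A₂⁻¹ 0 0 C₂⁻¹ * regressionCov A₁ (B₁ - B₂) C₁).trace := by
        rw [hshift, regressionCov_eq_blockLowerUnit_mul]
    _ = _ := by
        rw [regressionCov, fromBlocks_multiply, trace_fromBlocks]
        simp [Matrix.mul_add, trace_add, add_assoc]

end Matrix

open Matrix

theorem klGauss_regressionCov {n m : Type*} [Fintype n] [Fintype m] [DecidableEq n]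
    [DecidableEq m] (A₁ A₂ : Matrix n n ℝ) (B₁ B₂ : Matrix m n ℝ) (C₁ C₂ : Matrix m m ℝ)
    (hA₁ : A₁.det ≠ 0) (hA₂ : A₂.det ≠ 0) (hC₁ : C₁.det ≠ 0) (hC₂ : C₂.det ≠ 0) :
    klGauss (regressionCov A₁ B₁ C₁) (regressionCov A₂ B₂ C₂) =
      klGauss A₁ A₂ + klGauss C₁ C₂ +
        1 / 2 * (C₂⁻¹ * ((B₁ - B₂) * A₁ * (B₁ - B₂)ᵀ)).trace := by
  rw [klGauss, klGauss, klGauss, det_regressionCov, det_regressionCov,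
    trace_inv_regressionCov_mul _ _ _ _ _ _ hA₂.isUnit hC₂.isUnit,
    Real.log_mul hA₁ hC₁, Real.log_mul hA₂ hC₂, Fintype.card_sum, Nat.cast_add]
  ring

theorem klGauss_of_unit (s₁ s₂ : ℝ) :
    klGauss (of fun _ _ => s₁ : Matrix Unit Unit ℝ) (of fun _ _ => s₂) =
      1 / 2 * (Real.log s₂ - Real.log s₁ - 1 + s₁ / s₂) := by
  simp [klGauss, det_unique, trace, div_eq_inv_mul]

theorem trace_inv_of_unit_mul_replicateRow {ι : Type*} [Fintype ι] (s : ℝ) (S : Matrix ι ι ℝ)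
    (d : ι → ℝ) :
    ((of fun _ _ => s : Matrix Unit Unit ℝ)⁻¹ *
        (replicateRow Unit d * S * (replicateRow Unit d)ᵀ)).trace = (d ⬝ᵥ S *ᵥ d) / s := by
  rw [transpose_replicateRow, ← replicateRow_vecMul, replicateRow_mul_replicateCol,
    ← dotProduct_mulVec]
  simp [trace, div_eq_inv_mul]

theorem jointCov_eq_regressionCov {D : ℕ} (S : Matrix (Fin D) (Fin D) ℝ) (b : Fin D → ℝ)
    (s : ℝ) : jointCov S b s = regressionCov S (replicateRow Unit b) (of fun _ _ => s) := by
  rw [jointCov, regressionCov, transpose_replicateRow, ← replicateCol_mulVec,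
    ← replicateRow_vecMul, replicateRow_mul_replicateCol, ← dotProduct_mulVec]
  rfl

theorem klGauss_jointCov {D : ℕ}
    (S1 S2 : Matrix (Fin D) (Fin D) ℝ) (b1 b2 : Fin D → ℝ) (s1 s2 : ℝ)
    (hS1 : S1.PosDef) (hS2 : S2.PosDef) (hs1 : 0 < s1) (hs2 : 0 < s2) :
    klGauss (jointCov S1 b1 s1) (jointCov S2 b2 s2) =
      klGauss S1 S2
        + (1 / 2) * (Real.log s2 - Real.log s1 - 1 + s1 / s2)
        + (1 / 2) * ((b1 - b2) ⬝ᵥ S1.mulVec (b1 - b2)) / s2 := by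
  rw [jointCov_eq_regressionCov, jointCov_eq_regressionCov,
    klGauss_regressionCov _ _ _ _ _ _ hS1.det_pos.ne' hS2.det_pos.ne' (by simpa using hs1.ne')
      (by simpa using hs2.ne'),
    klGauss_of_unit, ← replicateRow_sub, trace_inv_of_unit_mul_replicateRow]
  ring
end

section
/- In the linear SEM with I − B_XX invertible and Cov(X) positive definite, the population least-squares regression coefficient β = Cov(X)⁻¹Cov(X, Y) satisfies β = β* + Cov(X)⁻¹η*, where η* = (I − B_XX)⁻¹ B_XH Σ_{ε_H} η₀. In particular, if B_XH Σ_{ε_H} η₀ = 0 then least squares is unbiased for β*. -/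
/-!
Since `X = C (ε_X + B_XH ε_H)` and `ε_X` is centered and independent of both `ε_H` and `ε_Y`, the
cross moments of `X` with the noises reduce to `E[X ε_Hᵀ] = C B_XH Σ_H` and `E[X ε_Y] = 0`
(the latter also because `ε_Y` is centered and independent of `ε_H`). Expanding
`Y = β*ᵀX + η₀ᵀε_H + ε_Y` then gives the normal equation `E[X Y] = Cov(X) β* + C B_XH Σ_H η₀`,
which is solved by `Cov(X)⁻¹`.
-/

open Matrix MeasureTheory ProbabilityTheory
open scoped ENNReal

section SecondMoments

variable {Ω l m n : Type*} [MeasurableSpace Ω] {μ : Measure Ω} [Fintype m] [Fintype n]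

lemma MeasureTheory.MemLp.integrable_fun_mul {f g : Ω → ℝ} (hf : MemLp f 2 μ)
    (hg : MemLp g 2 μ) : Integrable (fun ω => f ω * g ω) μ :=
  hf.integrable_mul hg

lemma MeasureTheory.MemLp.dotProduct {p : ℝ≥0∞} {U : Ω → n → ℝ} (hU : MemLp U p μ)
    (v : n → ℝ) : MemLp (fun ω => v ⬝ᵥ U ω) p μ :=
  memLp_finsetSum _ fun k _ => (hU.eval k).const_mul (v k)

lemma MeasureTheory.MemLp.mulVec {p : ℝ≥0∞} {U : Ω → n → ℝ} (hU : MemLp U p μ)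
    (A : Matrix m n ℝ) : MemLp (fun ω => A *ᵥ U ω) p μ :=
  MemLp.of_eval fun i => hU.dotProduct (A i)

lemma integral_mul_dotProduct (v : n → ℝ) {U : Ω → n → ℝ} {Z : Ω → ℝ}
    (hZU : ∀ k, Integrable (fun ω => Z ω * U ω k) μ) :
    ∫ ω, Z ω * (v ⬝ᵥ U ω) ∂μ = (fun k => ∫ ω, Z ω * U ω k ∂μ) ⬝ᵥ v := by
  simp only [dotProduct, Finset.mul_sum, mul_left_comm (Z _), mul_comm _ (v _)]
  rw [integral_finsetSum _ fun k _ => (hZU k).const_mul (v k)]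
  simp only [integral_const_mul]

lemma integral_mulVec_apply_mul (A : Matrix l n ℝ) {U : Ω → n → ℝ} {Z : Ω → ℝ}
    (hUZ : ∀ k, Integrable (fun ω => U ω k * Z ω) μ) (i : l) :
    ∫ ω, (A *ᵥ U ω) i * Z ω ∂μ = (A *ᵥ fun k => ∫ ω, U ω k * Z ω ∂μ) i := by
  simp only [mulVec, dotProduct, Finset.sum_mul, mul_assoc]
  rw [integral_finsetSum _ fun k _ => (hUZ k).const_mul (A i k)]
  simp only [integral_const_mul]

lemma integral_apply_mul_dotProduct_add_dotProduct_add {X : Ω → m → ℝ} {Z : Ω → n → ℝ}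
    {W : Ω → ℝ} (hX : MemLp X 2 μ) (hZ : MemLp Z 2 μ) (hW : MemLp W 2 μ)
    (b : m → ℝ) (c : n → ℝ) (i : m) :
    ∫ ω, X ω i * (b ⬝ᵥ X ω + c ⬝ᵥ Z ω + W ω) ∂μ =
      (fun j => ∫ ω, X ω i * X ω j ∂μ) ⬝ᵥ b + (fun q => ∫ ω, X ω i * Z ω q ∂μ) ⬝ᵥ c +
        ∫ ω, X ω i * W ω ∂μ := by
  have hXX : Integrable (fun ω => X ω i * (b ⬝ᵥ X ω)) μ :=
    (hX.eval i).integrable_fun_mul (hX.dotProduct b)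
  have hXZ : Integrable (fun ω => X ω i * (c ⬝ᵥ Z ω)) μ :=
    (hX.eval i).integrable_fun_mul (hZ.dotProduct c)
  have hXXZ : Integrable (fun ω => X ω i * (b ⬝ᵥ X ω) + X ω i * (c ⬝ᵥ Z ω)) μ := hXX.add hXZ
  simp only [mul_add]
  rw [integral_add hXXZ ((hX.eval i).integrable_fun_mul hW), integral_add hXX hXZ,
    integral_mul_dotProduct b fun j => (hX.eval i).integrable_fun_mul (hX.eval j),
    integral_mul_dotProduct c fun q => (hX.eval i).integrable_fun_mul (hZ.eval q)]

lemma ProbabilityTheory.IndepFun.integral_mul_eq_zero {f g : Ω → ℝ} (hfg : IndepFun f g μ)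
    (hf : AEStronglyMeasurable f μ) (hg : AEStronglyMeasurable g μ)
    (h0 : ∫ ω, f ω ∂μ = 0 ∨ ∫ ω, g ω ∂μ = 0) : ∫ ω, f ω * g ω ∂μ = 0 := by
  have hprod : ∫ ω, f ω * g ω ∂μ = (∫ ω, f ω ∂μ) * ∫ ω, g ω ∂μ :=
    hfg.integral_mul_eq_mul_integral hf hg
  rw [hprod, mul_eq_zero]
  exact h0

lemma integral_mulVec_add_mulVec_mul (C : Matrix l m ℝ) (B : Matrix m n ℝ)
    {U : Ω → m → ℝ} {V : Ω → n → ℝ} {Z : Ω → ℝ} (hU : MemLp U 2 μ) (hV : MemLp V 2 μ)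
    (hZ : MemLp Z 2 μ) (hUZ : ∀ k, ∫ ω, U ω k * Z ω ∂μ = 0) (i : l) :
    ∫ ω, (C *ᵥ (U ω + B *ᵥ V ω)) i * Z ω ∂μ = ((C * B) *ᵥ fun p => ∫ ω, V ω p * Z ω ∂μ) i := by
  have hBV (k : m) :
      ∫ ω, (U ω + B *ᵥ V ω) k * Z ω ∂μ = (B *ᵥ fun p => ∫ ω, V ω p * Z ω ∂μ) k := by
    have hUZ_int : Integrable (fun ω => U ω k * Z ω) μ := (hU.eval k).integrable_fun_mul hZ
    have hBVZ_int : Integrable (fun ω => (B *ᵥ V ω) k * Z ω) μ :=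
      ((hV.mulVec B).eval k).integrable_fun_mul hZ
    simp only [Pi.add_apply, add_mul]
    rw [integral_add hUZ_int hBVZ_int, hUZ k, zero_add]
    exact integral_mulVec_apply_mul B (fun p => (hV.eval p).integrable_fun_mul hZ) k
  calc ∫ ω, (C *ᵥ (U ω + B *ᵥ V ω)) i * Z ω ∂μ
      = (C *ᵥ fun k => ∫ ω, (U ω + B *ᵥ V ω) k * Z ω ∂μ) i :=
        integral_mulVec_apply_mul C
          (fun k => ((hU.add (hV.mulVec B)).eval k).integrable_fun_mul hZ) i
    _ = ((C * B) *ᵥ fun p => ∫ ω, V ω p * Z ω ∂μ) i := by simp only [hBV, ← mulVec_mulVec]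

lemma integral_mulVec_add_mulVec_mul_of_indepFun (C : Matrix l m ℝ) (B : Matrix m n ℝ)
    {U : Ω → m → ℝ} {V : Ω → n → ℝ} {Z : Ω → ℝ} (hU : MemLp U 2 μ) (hV : MemLp V 2 μ)
    (hZ : MemLp Z 2 μ) (hUZ : IndepFun U Z μ) (hU0 : ∀ k, ∫ ω, U ω k ∂μ = 0) (i : l) :
    ∫ ω, (C *ᵥ (U ω + B *ᵥ V ω)) i * Z ω ∂μ = ((C * B) *ᵥ fun p => ∫ ω, V ω p * Z ω ∂μ) i :=
  integral_mulVec_add_mulVec_mul C B hU hV hZ (fun k =>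
    (hUZ.comp (measurable_pi_apply k) measurable_id).integral_mul_eq_zero
      (hU.eval k).aestronglyMeasurable hZ.aestronglyMeasurable (.inl (hU0 k))) i

end SecondMoments

theorem sem_least_squares_general {D Q : ℕ}
    {Ω : Type*} [MeasurableSpace Ω] (μ : Measure Ω)
    (BXH : Matrix (Fin D) (Fin Q) ℝ)
    (bstar : Fin D → ℝ) (eta0 : Fin Q → ℝ)
    (C : Matrix (Fin D) (Fin D) ℝ)
    (epsX : Ω → Fin D → ℝ) (epsY : Ω → ℝ) (epsH : Ω → Fin Q → ℝ)
    (hmX : ∀ i, MemLp (fun ω => epsX ω i) 2 μ)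
    (hmY : MemLp epsY 2 μ)
    (hmH : ∀ q, MemLp (fun ω => epsH ω q) 2 μ)
    (hcX : ∀ i, ∫ ω, epsX ω i ∂μ = 0)
    (hcY : ∫ ω, epsY ω ∂μ = 0)
    (hXY : IndepFun epsX epsY μ)
    (hXH : IndepFun epsX epsH μ)
    (hYH : IndepFun epsY epsH μ)
    (SH : Matrix (Fin Q) (Fin Q) ℝ)
    (hSH : ∀ p q, ∫ ω, epsH ω p * epsH ω q ∂μ = SH p q)
    (X : Ω → Fin D → ℝ) (Y : Ω → ℝ)
    (hX : ∀ ω, X ω = C.mulVec (epsX ω + BXH.mulVec (epsH ω)))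
    (hY : ∀ ω, Y ω = bstar ⬝ᵥ X ω + eta0 ⬝ᵥ epsH ω + epsY ω)
    -- the covariance matrix of X and the cross-covariance with Y
    (CovX : Matrix (Fin D) (Fin D) ℝ)
    (hCovX : ∀ i j, CovX i j = ∫ ω, X ω i * X ω j ∂μ)
    (CovXY : Fin D → ℝ)
    (hCovXY : ∀ i, CovXY i = ∫ ω, X ω i * Y ω ∂μ)
    (hpd : CovX.PosDef) :
    CovX⁻¹.mulVec CovXY = bstar + CovX⁻¹.mulVec ((C * BXH * SH).mulVec eta0) ∧
    ((BXH * SH).mulVec eta0 = 0 → CovX⁻¹.mulVec CovXY = bstar) := by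
  have hL2εX : MemLp epsX 2 μ := MemLp.of_eval hmX
  have hL2εH : MemLp epsH 2 μ := MemLp.of_eval hmH
  have hL2X : MemLp X 2 μ := by
    rw [funext hX]
    exact (hL2εX.add (hL2εH.mulVec BXH)).mulVec C
  have hXεH (i : Fin D) (q : Fin Q) : ∫ ω, X ω i * epsH ω q ∂μ = (C * BXH * SH) i q := by
    simp only [hX, integral_mulVec_add_mulVec_mul_of_indepFun C BXH hL2εX hL2εH (hmH q)
      (hXH.comp measurable_id (measurable_pi_apply q)) hcX, hSH]
    rfl
  have hεHY (p : Fin Q) : ∫ ω, epsH ω p * epsY ω ∂μ = 0 :=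
    (hYH.symm.comp (measurable_pi_apply p) measurable_id).integral_mul_eq_zero
      (hmH p).aestronglyMeasurable hmY.aestronglyMeasurable (.inr hcY)
  have hXεY (i : Fin D) : ∫ ω, X ω i * epsY ω ∂μ = 0 := by
    simp only [hX, integral_mulVec_add_mulVec_mul_of_indepFun C BXH hL2εX hL2εH hmY hXY hcX,
      hεHY]
    exact congrFun (mulVec_zero (C * BXH)) i
  have normal_eq : CovXY = CovX *ᵥ bstar + (C * BXH * SH) *ᵥ eta0 := by
    ext i
    simp only [hCovXY, hY, integral_apply_mul_dotProduct_add_dotProduct_add hL2X hL2εH hmY,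
      hXεH, hXεY, ← hCovX, add_zero]
    rfl
  have hCovX_inv : CovX⁻¹ * CovX = 1 :=
    nonsing_inv_mul CovX ((isUnit_iff_isUnit_det CovX).mp hpd.isUnit)
  have hβ : CovX⁻¹ *ᵥ CovXY = bstar + CovX⁻¹ *ᵥ ((C * BXH * SH) *ᵥ eta0) := by
    rw [normal_eq, mulVec_add, mulVec_mulVec, hCovX_inv, one_mulVec]
  refine ⟨hβ, fun h0 => ?_⟩
  rw [hβ, Matrix.mul_assoc, ← mulVec_mulVec, h0, mulVec_zero, mulVec_zero, add_zero]

/-- In the linear SEM, the population least-squares coefficient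
`β = Cov(X)⁻¹ Cov(X, Y)` equals `β* + Cov(X)⁻¹ η*` where
`η* = (I − B_XX)⁻¹ B_XH Σ_H η₀`; in particular, if `B_XH Σ_H η₀ = 0`
then least squares is unbiased for `β*`. -/
theorem sem_least_squares {D Q : ℕ}
    {Ω : Type*} [MeasurableSpace Ω] (μ : Measure Ω) [IsProbabilityMeasure μ]
    (BXX : Matrix (Fin D) (Fin D) ℝ) (BXH : Matrix (Fin D) (Fin Q) ℝ)
    (bstar : Fin D → ℝ) (eta0 : Fin Q → ℝ)
    (C : Matrix (Fin D) (Fin D) ℝ)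
    (hC : C * (1 - BXX) = 1 ∧ (1 - BXX) * C = 1)
    (epsX : Ω → Fin D → ℝ) (epsY : Ω → ℝ) (epsH : Ω → Fin Q → ℝ)
    (hmX : ∀ i, MemLp (fun ω => epsX ω i) 2 μ)
    (hmY : MemLp epsY 2 μ)
    (hmH : ∀ q, MemLp (fun ω => epsH ω q) 2 μ)
    (hcX : ∀ i, ∫ ω, epsX ω i ∂μ = 0)
    (hcY : ∫ ω, epsY ω ∂μ = 0)
    (hcH : ∀ q, ∫ ω, epsH ω q ∂μ = 0)
    (hXY : IndepFun epsX epsY μ)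
    (hXH : IndepFun epsX epsH μ)
    (hYH : IndepFun epsY epsH μ)
    (SX : Matrix (Fin D) (Fin D) ℝ) (SH : Matrix (Fin Q) (Fin Q) ℝ)
    (hSX : ∀ i j, ∫ ω, epsX ω i * epsX ω j ∂μ = SX i j)
    (hSH : ∀ p q, ∫ ω, epsH ω p * epsH ω q ∂μ = SH p q)
    (X : Ω → Fin D → ℝ) (Y : Ω → ℝ)
    (hX : ∀ ω, X ω = C.mulVec (epsX ω + BXH.mulVec (epsH ω)))
    (hY : ∀ ω, Y ω = bstar ⬝ᵥ X ω + eta0 ⬝ᵥ epsH ω + epsY ω)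
    -- the covariance matrix of X and the cross-covariance with Y
    (CovX : Matrix (Fin D) (Fin D) ℝ)
    (hCovX : ∀ i j, CovX i j = ∫ ω, X ω i * X ω j ∂μ)
    (CovXY : Fin D → ℝ)
    (hCovXY : ∀ i, CovXY i = ∫ ω, X ω i * Y ω ∂μ)
    (hpd : CovX.PosDef) :
    CovX⁻¹.mulVec CovXY = bstar + CovX⁻¹.mulVec ((C * BXH * SH).mulVec eta0) ∧
    ((BXH * SH).mulVec eta0 = 0 → CovX⁻¹.mulVec CovXY = bstar) :=
  sem_least_squares_general μ BXH bstar eta0 C epsX epsY epsH hmX hmY hmH hcX hcY hXY hXH hYH SH hSH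
    X Y hX hY CovX hCovX CovXY hCovXY hpd
end

section
/- Let E ≥ 1 and for each e ∈ {1,…,E} let Σ_e be a D×D symmetric positive definite matrix, σ_e² > 0, β_e ∈ ℝ^D. Define L(β, η) = Σ_e (1/(2σ_e²)) (β_e − β − Σ_e⁻¹η)ᵀ Σ_e (β_e − β − Σ_e⁻¹η). If the matrix S_β = (Σ_e Σ_e⁻¹/σ_e²)(Σ_e Σ_e/σ_e²) − (Σ_e 1/σ_e²)² I_D is invertible, then the unique stationary point (β̃, η̃) of L satisfies β̃ = S_β⁻¹[(Σ_e Σ_e⁻¹/σ_e²)(Σ_e Σ_e β_e/σ_e²) − (Σ_e 1/σ_e²)(Σ_e β_e/σ_e²)]. -/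
/-!
Write `rₑ = βₑ - β - Σₑ⁻¹η` for the residuals. As `Σₑ` is symmetric, the derivative of the loss in
direction `(h₁, h₂)` is `-∑ₑ σₑ⁻² (h₁ + Σₑ⁻¹h₂)ᵀ Σₑ rₑ`, so a stationary point satisfies
`∑ₑ σₑ⁻² Σₑ rₑ = 0` and `∑ₑ σₑ⁻² rₑ = 0`. With `P = ∑ₑ σₑ⁻² Σₑ⁻¹`, `Q = ∑ₑ σₑ⁻² Σₑ`,
`c = ∑ₑ σₑ⁻²`, `u = ∑ₑ σₑ⁻² Σₑβₑ`, `w = ∑ₑ σₑ⁻² βₑ` these are the normal equations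
`Qβ + cη = u`, `cβ + Pη = w`, and eliminating `η` gives `(PQ - c²) β = Pu - cw`.
-/

open Matrix Finset

namespace Matrix

variable {n : Type*} [Fintype n]

theorem IsSymm.dotProduct_mulVec_comm {M : Matrix n n ℝ} (hM : M.IsSymm) (x y : n → ℝ) :
    x ⬝ᵥ M *ᵥ y = y ⬝ᵥ M *ᵥ x := by
  rw [dotProduct_mulVec, ← mulVec_transpose, hM.eq, dotProduct_comm]

noncomputable def dotProductMulVecBilin (M : Matrix n n ℝ) : (n → ℝ) →L[ℝ] (n → ℝ) →L[ℝ] ℝ :=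
  (LinearMap.mk₂ ℝ (fun x y => x ⬝ᵥ M *ᵥ y) (fun _ _ _ => add_dotProduct ..)
    (fun _ _ _ => smul_dotProduct ..) (fun _ _ _ => by rw [mulVec_add, dotProduct_add])
    (fun _ _ _ => by rw [mulVec_smul, dotProduct_smul])).toContinuousBilinearMap

end Matrix

section QuadraticForm

variable {n E : Type*} [Fintype n] [NormedAddCommGroup E] [NormedSpace ℝ E]
  {M : Matrix n n ℝ} {f : E → n → ℝ} {x : E}

theorem DifferentiableAt.dotProduct_mulVec_self (hf : DifferentiableAt ℝ f x) :
    DifferentiableAt ℝ (fun y => f y ⬝ᵥ M *ᵥ f y) x :=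
  (M.dotProductMulVecBilin.hasFDerivAt_of_bilinear hf.hasFDerivAt hf.hasFDerivAt).differentiableAt

theorem fderiv_dotProduct_mulVec_self_apply (hM : M.IsSymm) (hf : DifferentiableAt ℝ f x)
    (h : E) : fderiv ℝ (fun y => f y ⬝ᵥ M *ᵥ f y) x h = 2 * (fderiv ℝ f x h ⬝ᵥ M *ᵥ f x) := by
  change fderiv ℝ (fun y => M.dotProductMulVecBilin (f y) (f y)) x h = _
  rw [M.dotProductMulVecBilin.fderiv_of_bilinear hf hf]
  simp only [dotProductMulVecBilin, ContinuousLinearMap.precompR_apply,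
    ContinuousLinearMap.precompL_apply, ContinuousLinearMap.compL_apply, _root_.add_apply,
    ContinuousLinearMap.comp_apply, LinearMap.toContinuousBilinearMap_apply, LinearMap.mk₂_apply,
    hM.dotProduct_mulVec_comm (f x)]
  ring

end QuadraticForm

section KLRegression

variable {ι n : Type*} [Fintype n] [DecidableEq n]
  (S : ι → Matrix n n ℝ) (s2 : ι → ℝ) (b : ι → n → ℝ)

noncomputable def klResidual (e : ι) (p : (n → ℝ) × (n → ℝ)) : n → ℝ :=
  b e - p.1 - (S e)⁻¹ *ᵥ p.2

theorem hasFDerivAt_klResidual (e : ι) (p : (n → ℝ) × (n → ℝ)) :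
    HasFDerivAt (klResidual S b e)
      (-(ContinuousLinearMap.fst ℝ _ _ +
        (S e)⁻¹.mulVecLin.toContinuousLinearMap.comp (ContinuousLinearMap.snd ℝ _ _))) p := by
  have := (hasFDerivAt_const (b e) p).sub
    (ContinuousLinearMap.fst ℝ (n → ℝ) (n → ℝ) +
      (S e)⁻¹.mulVecLin.toContinuousLinearMap.comp (ContinuousLinearMap.snd ℝ _ _)).hasFDerivAt
  simpa [klResidual, sub_sub] using this

theorem fderiv_klResidual_apply (e : ι) (p h : (n → ℝ) × (n → ℝ)) :
    fderiv ℝ (klResidual S b e) p h = -(h.1 + (S e)⁻¹ *ᵥ h.2) := by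
  rw [(hasFDerivAt_klResidual S b e p).fderiv]
  simp

variable [Fintype ι]

noncomputable def klLoss (p : (n → ℝ) × (n → ℝ)) : ℝ :=
  ∑ e, (1 / (2 * s2 e)) * (klResidual S b e p ⬝ᵥ S e *ᵥ klResidual S b e p)

variable {S s2 b}

theorem fderiv_klLoss_apply (hS : ∀ e, (S e).IsSymm) (p h : (n → ℝ) × (n → ℝ)) :
    fderiv ℝ (klLoss S s2 b) p h =
      -∑ e, (s2 e)⁻¹ * ((h.1 + (S e)⁻¹ *ᵥ h.2) ⬝ᵥ S e *ᵥ klResidual S b e p) := by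
  have hr e := (hasFDerivAt_klResidual S b e p).differentiableAt
  unfold klLoss
  rw [fderiv_fun_sum fun e _ => (hr e).dotProduct_mulVec_self.const_mul _]
  simp only [_root_.sum_apply, fderiv_const_mul (hr _).dotProduct_mulVec_self,
    _root_.smul_apply, fderiv_dotProduct_mulVec_self_apply (hS _) (hr _),
    fderiv_klResidual_apply, neg_dotProduct, ← sum_neg_distrib]
  refine sum_congr rfl fun e _ => ?_
  ring

theorem klLoss_gradient_eq_zero (hS : ∀ e, (S e).IsSymm) (hSu : ∀ e, IsUnit (S e))
    {p : (n → ℝ) × (n → ℝ)} (hp : fderiv ℝ (klLoss S s2 b) p = 0) :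
    ∑ e, (s2 e)⁻¹ • S e *ᵥ klResidual S b e p = 0 ∧ ∑ e, (s2 e)⁻¹ • klResidual S b e p = 0 := by
  have hgrad h : fderiv ℝ (klLoss S s2 b) p h =
      -((∑ e, (s2 e)⁻¹ • S e *ᵥ klResidual S b e p) ⬝ᵥ h.1 +
        (∑ e, (s2 e)⁻¹ • klResidual S b e p) ⬝ᵥ h.2) := by
    rw [fderiv_klLoss_apply hS, sum_dotProduct, sum_dotProduct, ← sum_add_distrib]
    refine congrArg _ (sum_congr rfl fun e _ => ?_)
    rw [add_dotProduct, (hS e).dotProduct_mulVec_comm ((S e)⁻¹ *ᵥ h.2), mulVec_mulVec,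
      mul_nonsing_inv _ ((isUnit_iff_isUnit_det _).mp (hSu e)), one_mulVec]
    simp only [smul_dotProduct, smul_eq_mul, dotProduct_comm h.1, mul_add]
  simp only [hp, _root_.zero_apply, zero_eq_neg] at hgrad
  exact ⟨dotProduct_eq_zero_iff.mp fun x => by simpa using hgrad (x, 0),
    dotProduct_eq_zero_iff.mp fun y => by simpa using hgrad (0, y)⟩

theorem sum_smul_mulVec_klResidual (hSu : ∀ e, IsUnit (S e)) (β η : n → ℝ) :
    ∑ e, (s2 e)⁻¹ • S e *ᵥ klResidual S b e (β, η) = ∑ e, (s2 e)⁻¹ • S e *ᵥ b e -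
      ((∑ e, (s2 e)⁻¹ • S e) *ᵥ β + (∑ e, (s2 e)⁻¹) • η) := by
  simp only [klResidual, mulVec_sub, mulVec_mulVec,
    mul_nonsing_inv _ ((isUnit_iff_isUnit_det _).mp (hSu _)), one_mulVec, smul_sub,
    sum_sub_distrib, sum_mulVec, smul_mulVec, sum_smul]
  abel

theorem sum_smul_klResidual (β η : n → ℝ) :
    ∑ e, (s2 e)⁻¹ • klResidual S b e (β, η) = ∑ e, (s2 e)⁻¹ • b e -
      ((∑ e, (s2 e)⁻¹) • β + (∑ e, (s2 e)⁻¹ • (S e)⁻¹) *ᵥ η) := by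
  simp only [klResidual, smul_sub, sum_sub_distrib, sum_mulVec, smul_mulVec, sum_smul]
  abel

end KLRegression

theorem Matrix.mul_sub_sq_smul_one_mulVec_eq {n R : Type*} [Fintype n] [DecidableEq n]
    [CommRing R] {P Q : Matrix n n R} {c : R} {β η u w : n → R}
    (hu : Q *ᵥ β + c • η = u) (hw : c • β + P *ᵥ η = w) :
    (P * Q - c ^ 2 • 1) *ᵥ β = P *ᵥ u - c • w := by
  rw [← hu, ← hw, sub_mulVec, ← mulVec_mulVec, smul_mulVec, one_mulVec, mulVec_add, mulVec_smul,
    smul_add, pow_two, mul_smul]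
  abel

theorem kl_regression_stationary_point_general {D E : ℕ}
    (S : Fin E → Matrix (Fin D) (Fin D) ℝ) (s2 : Fin E → ℝ) (b : Fin E → Fin D → ℝ)
    (hS : ∀ e, (S e).PosDef)
    (L : (Fin D → ℝ) × (Fin D → ℝ) → ℝ)
    (hL : ∀ p : (Fin D → ℝ) × (Fin D → ℝ),
      L p = ∑ e, (1 / (2 * s2 e)) *
        ((b e - p.1 - (S e)⁻¹.mulVec p.2) ⬝ᵥ (S e).mulVec (b e - p.1 - (S e)⁻¹.mulVec p.2)))
    (Sbeta : Matrix (Fin D) (Fin D) ℝ)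
    (hSbeta : Sbeta = (∑ e, (s2 e)⁻¹ • (S e)⁻¹) * (∑ e, (s2 e)⁻¹ • S e)
      - ((∑ e, (s2 e)⁻¹) ^ 2) • (1 : Matrix (Fin D) (Fin D) ℝ))
    (hinv : IsUnit Sbeta) :
    ∀ β η : Fin D → ℝ, fderiv ℝ L (β, η) = 0 →
      β = Sbeta⁻¹.mulVec
        ((∑ e, (s2 e)⁻¹ • (S e)⁻¹).mulVec (∑ e, (s2 e)⁻¹ • (S e).mulVec (b e))
          - (∑ e, (s2 e)⁻¹) • (∑ e, (s2 e)⁻¹ • b e)) := by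
  intro β η hstat
  have hSymm e : (S e).IsSymm := isHermitian_iff_isSymm.mp (hS e).isHermitian
  have hSu e : IsUnit (S e) := (hS e).isUnit
  obtain rfl : L = klLoss S s2 b := funext hL
  obtain ⟨hβ, hη⟩ := klLoss_gradient_eq_zero hSymm hSu hstat
  rw [sum_smul_mulVec_klResidual hSu, sub_eq_zero] at hβ
  rw [sum_smul_klResidual, sub_eq_zero] at hη
  have : Invertible Sbeta := hinv.invertible
  exact (inv_mulVec_eq_vec (hSbeta ▸ (mul_sub_sq_smul_one_mulVec_eq hβ.symm hη.symm).symm)).symm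

/-- Any stationary point `(β, η)` of the reparametrized KL regression loss
has `β`-component equal to the closed-form KL regression solution, when the
scaling matrix `S_β` is invertible. -/
theorem kl_regression_stationary_point {D E : ℕ} (hE : 1 ≤ E)
    (S : Fin E → Matrix (Fin D) (Fin D) ℝ) (s2 : Fin E → ℝ) (b : Fin E → Fin D → ℝ)
    (hS : ∀ e, (S e).PosDef) (hs2 : ∀ e, 0 < s2 e)
    (L : (Fin D → ℝ) × (Fin D → ℝ) → ℝ)
    (hL : ∀ p : (Fin D → ℝ) × (Fin D → ℝ),
      L p = ∑ e, (1 / (2 * s2 e)) *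
        ((b e - p.1 - (S e)⁻¹.mulVec p.2) ⬝ᵥ (S e).mulVec (b e - p.1 - (S e)⁻¹.mulVec p.2)))
    (Sbeta : Matrix (Fin D) (Fin D) ℝ)
    (hSbeta : Sbeta = (∑ e, (s2 e)⁻¹ • (S e)⁻¹) * (∑ e, (s2 e)⁻¹ • S e)
      - ((∑ e, (s2 e)⁻¹) ^ 2) • (1 : Matrix (Fin D) (Fin D) ℝ))
    (hinv : IsUnit Sbeta) :
    ∀ β η : Fin D → ℝ, fderiv ℝ L (β, η) = 0 →
      β = Sbeta⁻¹.mulVec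
        ((∑ e, (s2 e)⁻¹ • (S e)⁻¹).mulVec (∑ e, (s2 e)⁻¹ • (S e).mulVec (b e))
          - (∑ e, (s2 e)⁻¹) • (∑ e, (s2 e)⁻¹ • b e)) :=
  kl_regression_stationary_point_general S s2 b hS L hL Sbeta hSbeta hinv
end

section
/- With the setup of the previous statement, suppose additionally that there exist β* ∈ ℝ^D and η* ∈ ℝ^D such that β_e = β* + Σ_e⁻¹η* for all e ∈ {1,…,E}, and that S_β is invertible. Then β̃ = S_β⁻¹[(Σ_e Σ_e⁻¹/σ_e²)(Σ_e Σ_e β_e/σ_e²) − (Σ_e 1/σ_e²)(Σ_e β_e/σ_e²)] equals β*. -/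
open Matrix Finset

namespace Matrix

variable {ι n R : Type*} [Fintype n] [DecidableEq n] [CommRing R]

theorem mulVec_nonsing_inv_mulVec {M : Matrix n n R} (hM : IsUnit M) (v : n → R) :
    M *ᵥ (M⁻¹ *ᵥ v) = v := by
  rw [mulVec_mulVec, mul_nonsing_inv _ ((isUnit_iff_isUnit_det M).mp hM), one_mulVec]

theorem nonsing_inv_mulVec_mulVec {M : Matrix n n R} (hM : IsUnit M) (v : n → R) :
    M⁻¹ *ᵥ (M *ᵥ v) = v := by
  rw [mulVec_mulVec, nonsing_inv_mul _ ((isUnit_iff_isUnit_det M).mp hM), one_mulVec]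

section ConfoundedModel

variable (s : Finset ι) (w : ι → R) {S : ι → Matrix n n R} {b : ι → n → R} {β η : n → R}

theorem sum_smul_of_eq_add_inv_mulVec (hb : ∀ e, b e = β + (S e)⁻¹ *ᵥ η) :
    ∑ e ∈ s, w e • b e = (∑ e ∈ s, w e) • β + (∑ e ∈ s, w e • (S e)⁻¹) *ᵥ η := by
  simp only [hb, smul_add, sum_add_distrib, sum_smul, sum_mulVec, smul_mulVec]

theorem sum_smul_mulVec_of_eq_add_inv_mulVec (hS : ∀ e, IsUnit (S e))
    (hb : ∀ e, b e = β + (S e)⁻¹ *ᵥ η) :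
    ∑ e ∈ s, w e • S e *ᵥ b e = (∑ e ∈ s, w e • S e) *ᵥ β + (∑ e ∈ s, w e) • η := by
  simp only [hb, mulVec_add, mulVec_nonsing_inv_mulVec (hS _), smul_add, sum_add_distrib,
    sum_smul, sum_mulVec, smul_mulVec]

end ConfoundedModel

/-- The `η`-terms cancel because the scalar `c` commutes with `A`. -/
theorem mulVec_sub_smul_eq (A B : Matrix n n R) (c : R) (β η : n → R) :
    A *ᵥ (B *ᵥ β + c • η) - c • (c • β + A *ᵥ η) = (A * B - c ^ 2 • 1) *ᵥ β := by
  rw [sub_mulVec, smul_mulVec, one_mulVec, mulVec_add, mulVec_smul, ← mulVec_mulVec]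
  simp only [smul_add, pow_two, smul_smul]
  abel

end Matrix

theorem kl_regression_recovers_invariant_general {D E : ℕ}
    (S : Fin E → Matrix (Fin D) (Fin D) ℝ) (s2 : Fin E → ℝ) (b : Fin E → Fin D → ℝ)
    (hS : ∀ e, (S e).PosDef)
    (bstar etastar : Fin D → ℝ)
    (hmodel : ∀ e, b e = bstar + (S e)⁻¹.mulVec etastar)
    (Sbeta : Matrix (Fin D) (Fin D) ℝ)
    (hSbeta : Sbeta = (∑ e, (s2 e)⁻¹ • (S e)⁻¹) * (∑ e, (s2 e)⁻¹ • S e)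
      - ((∑ e, (s2 e)⁻¹) ^ 2) • (1 : Matrix (Fin D) (Fin D) ℝ))
    (hinv : IsUnit Sbeta) :
    Sbeta⁻¹.mulVec
        ((∑ e, (s2 e)⁻¹ • (S e)⁻¹).mulVec (∑ e, (s2 e)⁻¹ • (S e).mulVec (b e))
          - (∑ e, (s2 e)⁻¹) • (∑ e, (s2 e)⁻¹ • b e)) = bstar := by
  rw [sum_smul_mulVec_of_eq_add_inv_mulVec _ _ (fun e => (hS e).isUnit) hmodel,
    sum_smul_of_eq_add_inv_mulVec _ _ hmodel, mulVec_sub_smul_eq, ← hSbeta,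
    nonsing_inv_mulVec_mulVec hinv]

/-- If the environment coefficients follow the confounded model
`β_e = β* + Σ_e⁻¹ η*` and `S_β` is invertible, then the KL regression
closed-form solution recovers the invariant vector `β*`. -/
theorem kl_regression_recovers_invariant {D E : ℕ} (hE : 1 ≤ E)
    (S : Fin E → Matrix (Fin D) (Fin D) ℝ) (s2 : Fin E → ℝ) (b : Fin E → Fin D → ℝ)
    (hS : ∀ e, (S e).PosDef) (hs2 : ∀ e, 0 < s2 e)
    (bstar etastar : Fin D → ℝ)
    (hmodel : ∀ e, b e = bstar + (S e)⁻¹.mulVec etastar)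
    (Sbeta : Matrix (Fin D) (Fin D) ℝ)
    (hSbeta : Sbeta = (∑ e, (s2 e)⁻¹ • (S e)⁻¹) * (∑ e, (s2 e)⁻¹ • S e)
      - ((∑ e, (s2 e)⁻¹) ^ 2) • (1 : Matrix (Fin D) (Fin D) ℝ))
    (hinv : IsUnit Sbeta) :
    Sbeta⁻¹.mulVec
        ((∑ e, (s2 e)⁻¹ • (S e)⁻¹).mulVec (∑ e, (s2 e)⁻¹ • (S e).mulVec (b e))
          - (∑ e, (s2 e)⁻¹) • (∑ e, (s2 e)⁻¹ • b e)) = bstar :=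
  kl_regression_recovers_invariant_general S s2 b hS bstar etastar hmodel Sbeta hSbeta hinv
end

section
/- Let Σ₁,…,Σ_E be D×D symmetric positive definite matrices and σ₁²,…,σ_E² > 0. Define P_f = Σ_e Σ_e⁻¹/σ_e² − (Σ_e 1/σ_e²) Σ_f⁻¹ for each f ∈ {1,…,E}, and B = (Σ_e Σ_e⁻¹/σ_e²)(Σ_e Σ_e/σ_e²)(Σ_e Σ_e⁻¹/σ_e²) − (Σ_e 1/σ_e²)²(Σ_e Σ_e⁻¹/σ_e²). Then B = Σ_f P_f (Σ_f/σ_f²) P_f; in particular B is positive semidefinite. -/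
/-!
With `A = Σ_e Σ_e⁻¹/σ_e²` and `c = Σ_e 1/σ_e²` we have `P_f = A - c Σ_f⁻¹`, and each term expands as
`P_f (Σ_f/σ_f²) P_f = σ_f⁻² A Σ_f A - 2 c σ_f⁻² A + c² σ_f⁻² Σ_f⁻¹`. Summing over `f`, the last two
terms collapse to `-2c²A + c²A = -c²A`, which gives `B`. Each term is the congruence of the positive
semidefinite `Σ_f/σ_f²` by the symmetric `P_f`, so the sum is positive semidefinite.
-/

open Matrix Finset

section WeightedSandwich

variable {ι n R : Type*} [Fintype ι] [Fintype n] [DecidableEq n] [CommRing R]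

theorem sub_smul_inv_mul_smul_mul_sub_smul_inv (A : Matrix n n R) {S : Matrix n n R}
    (hS : IsUnit S.det) (c w : R) :
    (A - c • S⁻¹) * (w • S) * (A - c • S⁻¹)
      = w • (A * S * A) - (2 * w * c) • A + (w * c ^ 2) • S⁻¹ := by
  simp only [sub_mul, mul_sub, Matrix.smul_mul, Matrix.mul_smul, smul_smul, mul_assoc,
    nonsing_inv_mul S hS, mul_nonsing_inv S hS, Matrix.mul_one, Matrix.one_mul]
  module

theorem sum_sub_smul_inv_mul_smul_mul_sub_smul_inv {S : ι → Matrix n n R}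
    (hS : ∀ e, IsUnit (S e).det) (w : ι → R) :
    ∑ f, (∑ e, w e • (S e)⁻¹ - (∑ e, w e) • (S f)⁻¹) * (w f • S f)
        * (∑ e, w e • (S e)⁻¹ - (∑ e, w e) • (S f)⁻¹)
      = (∑ e, w e • (S e)⁻¹) * (∑ e, w e • S e) * (∑ e, w e • (S e)⁻¹)
        - (∑ e, w e) ^ 2 • ∑ e, w e • (S e)⁻¹ := by
  set A := ∑ e, w e • (S e)⁻¹
  set c := ∑ e, w e
  simp only [sub_smul_inv_mul_smul_mul_sub_smul_inv A (hS _), sum_add_distrib, sum_sub_distrib]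
  have quadratic : ∑ f, w f • (A * S f * A) = A * (∑ e, w e • S e) * A := by
    simp only [mul_sum, sum_mul, Matrix.mul_smul, Matrix.smul_mul]
  have linear : ∑ f, (2 * w f * c) • A = (2 * c * c) • A := by
    rw [← sum_smul, ← sum_mul, ← mul_sum]
  have constant : ∑ f, (w f * c ^ 2) • (S f)⁻¹ = c ^ 2 • A := by
    simp only [A, smul_sum, smul_smul, mul_comm]
  rw [quadratic, linear, constant]
  module

end WeightedSandwich

theorem kl_regression_B_posSemidef_general {D E : ℕ}
    (S : Fin E → Matrix (Fin D) (Fin D) ℝ) (s2 : Fin E → ℝ)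
    (hS : ∀ e, (S e).PosDef) (hs2 : ∀ e, 0 < s2 e)
    (P : Fin E → Matrix (Fin D) (Fin D) ℝ)
    (hP : ∀ f, P f = (∑ e, (s2 e)⁻¹ • (S e)⁻¹) - (∑ e, (s2 e)⁻¹) • (S f)⁻¹)
    (B : Matrix (Fin D) (Fin D) ℝ)
    (hB : B = (∑ e, (s2 e)⁻¹ • (S e)⁻¹) * (∑ e, (s2 e)⁻¹ • S e) * (∑ e, (s2 e)⁻¹ • (S e)⁻¹)
      - ((∑ e, (s2 e)⁻¹) ^ 2) • (∑ e, (s2 e)⁻¹ • (S e)⁻¹)) :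
    B = ∑ f, P f * ((s2 f)⁻¹ • S f) * P f ∧ B.PosSemidef := by
  have hB_sum : B = ∑ f, P f * ((s2 f)⁻¹ • S f) * P f := by
    simp only [hB, hP,
      sum_sub_smul_inv_mul_smul_mul_sub_smul_inv fun e => (hS e).det_pos.ne'.isUnit]
  refine ⟨hB_sum, hB_sum ▸ posSemidef_sum _ fun f _ => ?_⟩
  have hP_symm : (P f)ᴴ = P f := by
    rw [hP]
    exact (isSelfAdjoint_sum _ fun e _ => (hS e).inv.isHermitian.smul (.all (s2 e)⁻¹)).sub
      ((hS f).inv.isHermitian.smul (.all (∑ e, (s2 e)⁻¹)))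
  have hterm :=
    ((hS f).posSemidef.smul (inv_nonneg.2 (hs2 f).le)).mul_mul_conjTranspose_same (P f)
  rwa [hP_symm] at hterm

/-- The matrix `B` from the invertibility analysis of the KL regression scaling
matrix decomposes as `B = Σ_f P_f (Σ_f/σ_f²) P_f`; in particular it is
positive semidefinite. -/
theorem kl_regression_B_posSemidef {D E : ℕ} (hE : 1 ≤ E)
    (S : Fin E → Matrix (Fin D) (Fin D) ℝ) (s2 : Fin E → ℝ)
    (hS : ∀ e, (S e).PosDef) (hs2 : ∀ e, 0 < s2 e)
    (P : Fin E → Matrix (Fin D) (Fin D) ℝ)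
    (hP : ∀ f, P f = (∑ e, (s2 e)⁻¹ • (S e)⁻¹) - (∑ e, (s2 e)⁻¹) • (S f)⁻¹)
    (B : Matrix (Fin D) (Fin D) ℝ)
    (hB : B = (∑ e, (s2 e)⁻¹ • (S e)⁻¹) * (∑ e, (s2 e)⁻¹ • S e) * (∑ e, (s2 e)⁻¹ • (S e)⁻¹)
      - ((∑ e, (s2 e)⁻¹) ^ 2) • (∑ e, (s2 e)⁻¹ • (S e)⁻¹)) :
    B = ∑ f, P f * ((s2 f)⁻¹ • S f) * P f ∧ B.PosSemidef :=
  kl_regression_B_posSemidef_general S s2 hS hs2 P hP B hB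
end

section
/- Let Σ₁,…,Σ_E be D×D symmetric positive definite matrices and σ₁²,…,σ_E² > 0. Define S_β = (Σ_e Σ_e⁻¹/σ_e²)(Σ_e Σ_e/σ_e²) − (Σ_e 1/σ_e²)² I_D. If there exists e* ∈ {1,…,E} such that the matrix Σ_{e*}⁻¹ − (Σ_e 1/σ_e²)⁻¹(Σ_e Σ_e⁻¹/σ_e²) is invertible, then S_β is invertible. -/
/-!
Write `w e = 1 / σ_e²`, `c = ∑ w e`, `T = ∑ w e • Σ_e⁻¹` and `P e = T - c • Σ_e⁻¹`. Expanding,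
`∑ w e • P e * Σ_e * P e = (T * ∑ w e • Σ_e - c² • 1) * T = S_β * T`. Every `P e` is symmetric, so
each summand is positive semidefinite, and the summand of `e*` is positive definite because
`P e* = -c • (Σ_{e*}⁻¹ - c⁻¹ • T)` is invertible. Hence `S_β * T` is positive definite, in
particular invertible, and so is `S_β`.
-/

open Matrix Finset

section Identity

variable {n R : Type*} [Fintype n] [DecidableEq n] [CommRing R]

theorem Matrix.sub_smul_inv_mul_mul_sub_smul_inv {S : Matrix n n R} (hS : IsUnit S.det)
    (T : Matrix n n R) (c : R) :
    (T - c • S⁻¹) * S * (T - c • S⁻¹) = T * S * T - (2 * c) • T + c ^ 2 • S⁻¹ := by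
  have h₁ : S⁻¹ * S = 1 := nonsing_inv_mul S hS
  have h₂ : S * S⁻¹ = 1 := mul_nonsing_inv S hS
  simp only [sub_mul, mul_sub, smul_mul_assoc, mul_smul_comm, Matrix.mul_assoc, h₁, h₂,
    Matrix.mul_one, Matrix.one_mul]
  module

theorem Matrix.sum_smul_sub_smul_inv_mul_mul_sub_smul_inv {ι : Type*} [Fintype ι] (w : ι → R)
    {S : ι → Matrix n n R} (hS : ∀ i, IsUnit (S i).det) {T : Matrix n n R}
    (hT : ∑ i, w i • (S i)⁻¹ = T) {c : R} (hc : ∑ i, w i = c) :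
    ∑ i, w i • ((T - c • (S i)⁻¹) * S i * (T - c • (S i)⁻¹))
      = (T * ∑ i, w i • S i - c ^ 2 • 1) * T := by
  have hterm : ∀ i, w i • ((T - c • (S i)⁻¹) * S i * (T - c • (S i)⁻¹))
      = T * (w i • S i) * T - (2 * c * w i) • T + c ^ 2 • (w i • (S i)⁻¹) := fun i => by
    rw [sub_smul_inv_mul_mul_sub_smul_inv (hS i)]
    simp only [mul_smul_comm, smul_mul_assoc]
    module
  rw [sum_congr rfl fun i _ => hterm i, sum_add_distrib, sum_sub_distrib, ← sum_mul, ← mul_sum,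
    ← Finset.smul_sum, ← sum_smul, ← mul_sum, hT, hc, sub_mul, smul_mul_assoc, Matrix.one_mul]
  module

end Identity

open scoped ComplexOrder in
theorem Matrix.posDef_sum_smul_conjTranspose_mul_mul {n ι 𝕜 : Type*} [Fintype n] [Fintype ι]
    [RCLike 𝕜] {w : ι → ℝ} (hw : ∀ i, 0 < w i) {S P : ι → Matrix n n 𝕜}
    (hS : ∀ i, (S i).PosDef) {j : ι} (hP : Function.Injective (P j).mulVec) :
    (∑ i, w i • ((P i)ᴴ * S i * P i)).PosDef := by
  classical
  rw [← add_sum_erase _ _ (mem_univ j)]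
  refine PosDef.add_posSemidef (((hS j).conjTranspose_mul_mul_same hP).smul (hw j))
    (posSemidef_sum _ fun i _ => ?_)
  exact ((hS i).posSemidef.conjTranspose_mul_mul_same _).smul (hw i).le

theorem kl_regression_Sbeta_invertible_general {D E : ℕ}
    (S : Fin E → Matrix (Fin D) (Fin D) ℝ) (s2 : Fin E → ℝ)
    (hS : ∀ e, (S e).PosDef) (hs2 : ∀ e, 0 < s2 e)
    (Sbeta : Matrix (Fin D) (Fin D) ℝ)
    (hSbeta : Sbeta = (∑ e, (s2 e)⁻¹ • (S e)⁻¹) * (∑ e, (s2 e)⁻¹ • S e)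
      - ((∑ e, (s2 e)⁻¹) ^ 2) • (1 : Matrix (Fin D) (Fin D) ℝ))
    (hcrit : ∃ estar : Fin E,
      IsUnit ((S estar)⁻¹ - (∑ e, (s2 e)⁻¹)⁻¹ • (∑ e, (s2 e)⁻¹ • (S e)⁻¹))) :
    IsUnit Sbeta := by
  obtain ⟨j, hj⟩ := hcrit
  set c := ∑ e, (s2 e)⁻¹ with hc
  set T := ∑ e, (s2 e)⁻¹ • (S e)⁻¹ with hT
  set P := fun e => T - c • (S e)⁻¹ with hP
  have hw : ∀ e, 0 < (s2 e)⁻¹ := fun e => inv_pos.mpr (hs2 e)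
  have hc_ne : c ≠ 0 := (sum_pos (fun e _ => hw e) ⟨j, mem_univ j⟩).ne'
  have hinv_herm : ∀ e, (S e)⁻¹.IsHermitian := fun e => (hS e).isHermitian.inv
  have hT_herm : T.IsHermitian :=
    isSelfAdjoint_sum univ fun e _ => (hinv_herm e).smul (.all (s2 e)⁻¹)
  have hP_herm : ∀ e, (P e)ᴴ = P e := fun e => (hT_herm.sub ((hinv_herm e).smul (.all c))).eq
  have hPj : IsUnit (P j) := by
    have : P j = (-c) • ((S j)⁻¹ - c⁻¹ • T) := by
      rw [smul_sub, smul_smul, neg_mul, mul_inv_cancel₀ hc_ne]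
      module
    rw [this]
    exact (isUnit_smul_iff (Units.mk0 _ (neg_ne_zero.mpr hc_ne)) _).mpr hj
  have hfactor : Sbeta * T = ∑ e, (s2 e)⁻¹ • ((P e)ᴴ * S e * P e) := by
    simp only [hP_herm]
    simp only [hP]
    rw [sum_smul_sub_smul_inv_mul_mul_sub_smul_inv _ (fun e => (hS e).isUnit.map detMonoidHom)
      hT.symm hc.symm, hSbeta]
  have hpd := posDef_sum_smul_conjTranspose_mul_mul hw hS (mulVec_injective_of_isUnit hPj)
  exact isUnit_of_mul_isUnit_left (hfactor ▸ hpd.isUnit)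

/-- Bhagwat–Subramanian invertibility criterion for the KL regression scaling
matrix `S_β`: if for some environment `e*` the matrix
`Σ_{e*}⁻¹ − (Σ_e 1/σ_e²)⁻¹ (Σ_e Σ_e⁻¹/σ_e²)` is invertible, then `S_β` is
invertible. -/
theorem kl_regression_Sbeta_invertible {D E : ℕ} (hE : 1 ≤ E)
    (S : Fin E → Matrix (Fin D) (Fin D) ℝ) (s2 : Fin E → ℝ)
    (hS : ∀ e, (S e).PosDef) (hs2 : ∀ e, 0 < s2 e)
    (Sbeta : Matrix (Fin D) (Fin D) ℝ)
    (hSbeta : Sbeta = (∑ e, (s2 e)⁻¹ • (S e)⁻¹) * (∑ e, (s2 e)⁻¹ • S e)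
      - ((∑ e, (s2 e)⁻¹) ^ 2) • (1 : Matrix (Fin D) (Fin D) ℝ))
    (hcrit : ∃ estar : Fin E,
      IsUnit ((S estar)⁻¹ - (∑ e, (s2 e)⁻¹)⁻¹ • (∑ e, (s2 e)⁻¹ • (S e)⁻¹))) :
    IsUnit Sbeta :=
  kl_regression_Sbeta_invertible_general S s2 hS hs2 Sbeta hSbeta hcrit
end

section
/- Let E = 2, D ≥ 1, Σ₁, Σ₂ symmetric positive definite D×D matrices, and σ₁² = σ₂² = 1. If Σ₂⁻¹Σ₁ − I_D is invertible, then S_β = (Σ₁⁻¹ + Σ₂⁻¹)(Σ₁ + Σ₂) − 4 I_D is invertible. -/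
open Matrix

/-!
With `X = Σ₁⁻¹Σ₂` and `Y = Σ₂⁻¹Σ₁ = X⁻¹`, expanding gives
`(Σ₁⁻¹ + Σ₂⁻¹)(Σ₁ + Σ₂) − 4 = X + Y − 2 = X (Y − 1)²`,
a product of units whenever `Y − 1` is one.
-/

namespace Ring

variable {R : Type*} [Ring R] {a b : R}

theorem inverse_add_inverse_mul_add_sub_four (ha : IsUnit a) (hb : IsUnit b) :
    (inverse a + inverse b) * (a + b) - 4 = inverse a * b * (inverse b * a - 1) ^ 2 := by
  obtain ⟨u, rfl⟩ := ha
  obtain ⟨v, rfl⟩ := hb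
  simp only [inverse_unit]
  have hXY : (↑u⁻¹ * ↑v : R) * (↑v⁻¹ * ↑u) = 1 := by
    rw [mul_assoc, ← mul_assoc (v : R), Units.mul_inv, one_mul, Units.inv_mul]
  calc (↑u⁻¹ + ↑v⁻¹) * ((u : R) + v) - 4
      = ↑u⁻¹ * ↑u + ↑u⁻¹ * ↑v + ↑v⁻¹ * ↑u + ↑v⁻¹ * ↑v - 4 := by noncomm_ring
    _ = ↑u⁻¹ * ↑v + ↑v⁻¹ * ↑u - 2 := by
      rw [Units.inv_mul, Units.inv_mul, show (4 : R) = 2 + 1 + 1 by norm_num]; abel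
    _ = ↑u⁻¹ * ↑v * (↑v⁻¹ * ↑u - 1) ^ 2 := by
      rw [sq, show ∀ x y : R, x * ((y - 1) * (y - 1)) = x * y * y - 2 * (x * y) + x from
        fun x y => by noncomm_ring, hXY, one_mul, mul_one]
      abel

theorem isUnit_inverse_add_inverse_mul_add_sub_four (ha : IsUnit a) (hb : IsUnit b)
    (hba : IsUnit (inverse b * a - 1)) : IsUnit ((inverse a + inverse b) * (a + b) - 4) := by
  rw [inverse_add_inverse_mul_add_sub_four ha hb]
  exact (ha.ringInverse.mul hb).mul (hba.pow 2)

end Ring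

theorem kl_regression_two_environments_general {D : ℕ}
    (S1 S2 : Matrix (Fin D) (Fin D) ℝ)
    (hS1 : S1.PosDef) (hS2 : S2.PosDef)
    (h : IsUnit (S2⁻¹ * S1 - 1)) :
    IsUnit ((S1⁻¹ + S2⁻¹) * (S1 + S2) - (4 : ℝ) • (1 : Matrix (Fin D) (Fin D) ℝ)) := by
  rw [show (4 : ℝ) • (1 : Matrix (Fin D) (Fin D) ℝ) = 4 from
    (ofNat_smul_eq_nsmul ..).trans (nsmul_one 4)]
  simp only [nonsing_inv_eq_ringInverse] at h ⊢
  exact Ring.isUnit_inverse_add_inverse_mul_add_sub_four hS1.isUnit hS2.isUnit h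

/-- Two-environment specialization (unit residual variances): if
`Σ₂⁻¹Σ₁ − I` is invertible then `S_β = (Σ₁⁻¹+Σ₂⁻¹)(Σ₁+Σ₂) − 4I` is
invertible. -/
theorem kl_regression_two_environments {D : ℕ} (hD : 1 ≤ D)
    (S1 S2 : Matrix (Fin D) (Fin D) ℝ)
    (hS1 : S1.PosDef) (hS2 : S2.PosDef)
    (h : IsUnit (S2⁻¹ * S1 - 1)) :
    IsUnit ((S1⁻¹ + S2⁻¹) * (S1 + S2) - (4 : ℝ) • (1 : Matrix (Fin D) (Fin D) ℝ)) :=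
  kl_regression_two_environments_general S1 S2 hS1 hS2 h
end

section
/- With β_e = β* + Σ_e⁻¹(η* + δ_e) and S_β invertible as above, the estimation error satisfies the exact identity S_β(β̃ − β*) = (Σ_e Σ_e⁻¹/σ_e²)(Σ_e δ_e/σ_e²) − (Σ_e 1/σ_e²)(Σ_e Σ_e⁻¹δ_e/σ_e²). In particular if all δ_e are equal to a common δ, then β̃ = β*. -/
/-!
`β̃` solves the normal equations `S_β β̃ = r(b)`, where `r` is linear in the family `b = (β_e)`.
Splitting `β_e = β* + Σ_e⁻¹ η* + Σ_e⁻¹ δ_e`, the constant family `β*` is sent to `S_β β*`, and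
every family `Σ_e⁻¹ v` with `v` common to all environments is sent to `0`, because the `Σ_e`
cancel in `∑_e Σ_e Σ_e⁻¹ v / σ_e² = (∑_e 1/σ_e²) v`. Hence `S_β (β̃ − β*)` is `r` of the family
`Σ_e⁻¹ δ_e`, which vanishes when all `δ_e` are equal.
-/

open Matrix Finset

namespace KLRegression

variable {ι n R : Type*} [Fintype ι] [Fintype n] [DecidableEq n] [CommRing R]

/-- The matrix `S_β` of the normal equations, for weights `w e = 1 / σ_e²`. -/
noncomputable def normalMatrix (w : ι → R) (S : ι → Matrix n n R) : Matrix n n R :=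
  (∑ e, w e • (S e)⁻¹) * (∑ e, w e • S e) - (∑ e, w e) ^ 2 • 1

/-- The right-hand side `r(b)` of the normal equations `S_β β̃ = r(b)`. -/
noncomputable def normalRHS (w : ι → R) (S : ι → Matrix n n R) (b : ι → n → R) : n → R :=
  (∑ e, w e • (S e)⁻¹) *ᵥ (∑ e, w e • S e *ᵥ b e) - (∑ e, w e) • ∑ e, w e • b e

variable (w : ι → R) (S : ι → Matrix n n R)

theorem normalRHS_add (b b' : ι → n → R) :
    normalRHS w S (fun e => b e + b' e) = normalRHS w S b + normalRHS w S b' := by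
  simp only [normalRHS, mulVec_add, smul_add, sum_add_distrib]
  abel

theorem normalRHS_const (v : n → R) :
    normalRHS w S (fun _ => v) = normalMatrix w S *ᵥ v := by
  simp only [normalRHS, normalMatrix, sub_mulVec, ← mulVec_mulVec, sum_mulVec, smul_mulVec,
    one_mulVec, sum_smul, pow_two, mul_smul]

theorem normalRHS_inv_mulVec (hS : ∀ e, IsUnit (S e)) (δ : ι → n → R) :
    normalRHS w S (fun e => (S e)⁻¹ *ᵥ δ e) =
      (∑ e, w e • (S e)⁻¹) *ᵥ (∑ e, w e • δ e) - (∑ e, w e) • ∑ e, w e • (S e)⁻¹ *ᵥ δ e := by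
  have hcancel (e : ι) : S e *ᵥ ((S e)⁻¹ *ᵥ δ e) = δ e := by
    rw [mulVec_mulVec, mul_nonsing_inv _ ((isUnit_iff_isUnit_det _).mp (hS e)), one_mulVec]
  simp only [normalRHS, hcancel]

theorem normalRHS_inv_mulVec_const (hS : ∀ e, IsUnit (S e)) (v : n → R) :
    normalRHS w S (fun e => (S e)⁻¹ *ᵥ v) = 0 := by
  simp only [normalRHS_inv_mulVec w S hS, ← sum_smul, ← smul_mulVec, ← sum_mulVec, mulVec_smul,
    sub_self]

theorem normalRHS_inv_mulVec_add_const (hS : ∀ e, IsUnit (S e)) (η : n → R) (δ : ι → n → R) :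
    normalRHS w S (fun e => (S e)⁻¹ *ᵥ (η + δ e)) = normalRHS w S (fun e => (S e)⁻¹ *ᵥ δ e) := by
  simp only [mulVec_add, normalRHS_add, normalRHS_inv_mulVec_const w S hS, zero_add]

theorem normalMatrix_mulVec_sub (hS : ∀ e, IsUnit (S e)) (βstar η : n → R) (δ : ι → n → R)
    (βtilde : n → R) (hβ : normalMatrix w S *ᵥ βtilde =
      normalRHS w S (fun e => βstar + (S e)⁻¹ *ᵥ (η + δ e))) :
    normalMatrix w S *ᵥ (βtilde - βstar) = normalRHS w S (fun e => (S e)⁻¹ *ᵥ δ e) := by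
  rw [mulVec_sub, hβ, normalRHS_add, normalRHS_const, normalRHS_inv_mulVec_add_const w S hS,
    add_sub_cancel_left]

end KLRegression

open KLRegression in
theorem kl_regression_error_identity_general {D E : ℕ}
    (S : Fin E → Matrix (Fin D) (Fin D) ℝ) (s2 : Fin E → ℝ) (b : Fin E → Fin D → ℝ)
    (hS : ∀ e, (S e).PosDef)
    (bstar etastar : Fin D → ℝ) (δ : Fin E → Fin D → ℝ)
    (hmodel : ∀ e, b e = bstar + (S e)⁻¹.mulVec (etastar + δ e))
    (Sbeta : Matrix (Fin D) (Fin D) ℝ)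
    (hSbeta : Sbeta = (∑ e, (s2 e)⁻¹ • (S e)⁻¹) * (∑ e, (s2 e)⁻¹ • S e)
      - ((∑ e, (s2 e)⁻¹) ^ 2) • (1 : Matrix (Fin D) (Fin D) ℝ))
    (hinv : IsUnit Sbeta)
    (btilde : Fin D → ℝ)
    (hbt : btilde = Sbeta⁻¹.mulVec
        ((∑ e, (s2 e)⁻¹ • (S e)⁻¹).mulVec (∑ e, (s2 e)⁻¹ • (S e).mulVec (b e))
          - (∑ e, (s2 e)⁻¹) • (∑ e, (s2 e)⁻¹ • b e))) :
    Sbeta.mulVec (btilde - bstar) =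
      (∑ e, (s2 e)⁻¹ • (S e)⁻¹).mulVec (∑ e, (s2 e)⁻¹ • δ e)
        - (∑ e, (s2 e)⁻¹) • (∑ e, (s2 e)⁻¹ • (S e)⁻¹.mulVec (δ e)) ∧
    (∀ δ0 : Fin D → ℝ, (∀ e, δ e = δ0) → btilde = bstar) := by
  set w : Fin E → ℝ := fun e => (s2 e)⁻¹
  have hSunit (e : Fin E) : IsUnit (S e) := (hS e).isUnit
  have hSbeta' : Sbeta = normalMatrix w S := hSbeta
  have hb : b = fun e => bstar + (S e)⁻¹ *ᵥ (etastar + δ e) := funext hmodel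
  have hnormal : Sbeta *ᵥ btilde = normalRHS w S b := by
    rw [hbt, mulVec_mulVec, mul_nonsing_inv _ ((isUnit_iff_isUnit_det _).mp hinv), one_mulVec]
    rfl
  have herror : Sbeta *ᵥ (btilde - bstar) = normalRHS w S (fun e => (S e)⁻¹ *ᵥ δ e) := by
    rw [hSbeta'] at hnormal ⊢
    exact normalMatrix_mulVec_sub w S hSunit bstar etastar δ btilde (hb ▸ hnormal)
  refine ⟨herror.trans (normalRHS_inv_mulVec w S hSunit δ), fun δ0 hδ0 => ?_⟩
  have hzero : Sbeta *ᵥ (btilde - bstar) = Sbeta *ᵥ 0 := by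
    rw [herror, funext hδ0, normalRHS_inv_mulVec_const w S hSunit, mulVec_zero]
  exact sub_eq_zero.mp (mulVec_injective_of_isUnit hinv hzero)

/-- Exact misspecification error identity for KL regression, and unbiasedness
when the misspecification is common to all environments. -/
theorem kl_regression_error_identity {D E : ℕ} (hE : 1 ≤ E)
    (S : Fin E → Matrix (Fin D) (Fin D) ℝ) (s2 : Fin E → ℝ) (b : Fin E → Fin D → ℝ)
    (hS : ∀ e, (S e).PosDef) (hs2 : ∀ e, 0 < s2 e)
    (bstar etastar : Fin D → ℝ) (δ : Fin E → Fin D → ℝ)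
    (hmodel : ∀ e, b e = bstar + (S e)⁻¹.mulVec (etastar + δ e))
    (Sbeta : Matrix (Fin D) (Fin D) ℝ)
    (hSbeta : Sbeta = (∑ e, (s2 e)⁻¹ • (S e)⁻¹) * (∑ e, (s2 e)⁻¹ • S e)
      - ((∑ e, (s2 e)⁻¹) ^ 2) • (1 : Matrix (Fin D) (Fin D) ℝ))
    (hinv : IsUnit Sbeta)
    (btilde : Fin D → ℝ)
    (hbt : btilde = Sbeta⁻¹.mulVec
        ((∑ e, (s2 e)⁻¹ • (S e)⁻¹).mulVec (∑ e, (s2 e)⁻¹ • (S e).mulVec (b e))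
          - (∑ e, (s2 e)⁻¹) • (∑ e, (s2 e)⁻¹ • b e))) :
    Sbeta.mulVec (btilde - bstar) =
      (∑ e, (s2 e)⁻¹ • (S e)⁻¹).mulVec (∑ e, (s2 e)⁻¹ • δ e)
        - (∑ e, (s2 e)⁻¹) • (∑ e, (s2 e)⁻¹ • (S e)⁻¹.mulVec (δ e)) ∧
    (∀ δ0 : Fin D → ℝ, (∀ e, δ e = δ0) → btilde = bstar) :=
  kl_regression_error_identity_general S s2 b hS bstar etastar δ hmodel Sbeta hSbeta hinv btilde hbt
end

section
/- Let Σ₁,…,Σ_E be D×D symmetric positive definite matrices and σ_e² > 0, with S_β invertible. Define W = S_β⁻¹[(Σ_e Σ_e⁻¹/σ_e) Ū − (Σ_e 1/σ_e²) Ī] as the linear map sending stacked per-environment coefficients (β_e/σ_e)_{e} to the KL regression output. Then the matrix 𝕀ᵀA𝕀 appearing in the conditional covariance satisfies 𝕀ᵀA𝕀 = (Σ_e Σ_e⁻¹/σ_e²) S_βᵀ, and consequently, when all environments have n samples, the conditional covariance of the plug-in KL regression estimator (for Gaussian noise, conditioned on covariates, with known σ_e²) equals V = (1/n) S_β⁻¹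 (Σ_e Σ_e⁻¹/σ_e²). -/
/-!
Writing `P = ∑ σ_e⁻² Σ_e⁻¹`, `Q = ∑ σ_e⁻² Σ_e` and `c = ∑ σ_e⁻²`, every product of two stacked
matrices, possibly with the block diagonal `diag(Σ_e⁻¹)` in between, collapses to one of `P`, `Q`
or `c • 1`; in particular `𝕀ᵀ𝕍 = 𝕍ᵀ𝕀 = P` and `𝕀ᵀ𝕀 = c • 1`. Hence
`𝕀ᵀA𝕀 = (P𝕌ᵀ − c𝕀ᵀ) diag(Σ_e⁻¹) (𝕌P − c𝕀) = PQP − c²P = P S_βᵀ`, using the symmetry of the `Σ_e`,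
and the factor `S_βᵀ` cancels against `S_β⁻ᵀ` in the covariance.
-/

open Matrix Finset

namespace Matrix

section

variable {ι n R : Type*} [Fintype ι] [Fintype n] [CommSemiring R]

/-- The paper's `𝕌`, `𝕍`, `𝕀` are `stack σ⁻¹ Σ`, `stack σ⁻¹ Σ⁻¹` and `stack σ⁻¹ 1`. -/
def stack (w : ι → R) (M : ι → Matrix n n R) : Matrix (ι × n) n R :=
  of fun p j => w p.1 * M p.1 p.2 j

/-- Like `Matrix.blockDiagonal`, but with the block index as the first component. -/
def blockDiagonalFst [DecidableEq ι] (B : ι → Matrix n n R) : Matrix (ι × n) (ι × n) R :=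
  of fun p q => if p.1 = q.1 then B p.1 p.2 q.2 else 0

theorem stack_transpose_mul_stack (w : ι → R) (M N : ι → Matrix n n R) :
    (stack w M)ᵀ * stack w N = ∑ e, w e ^ 2 • ((M e)ᵀ * N e) := by
  ext i j
  simp only [stack, mul_apply, transpose_apply, of_apply, Fintype.sum_prod_type, sum_apply,
    smul_apply, smul_eq_mul, mul_sum]
  exact sum_congr rfl fun e _ => sum_congr rfl fun k _ => by ring

theorem blockDiagonalFst_mul_stack [DecidableEq ι] (B : ι → Matrix n n R) (w : ι → R)
    (N : ι → Matrix n n R) :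
    blockDiagonalFst B * stack w N = stack w fun e => B e * N e := by
  ext ⟨e, i⟩ j
  simp only [stack, blockDiagonalFst, mul_apply, of_apply, Fintype.sum_prod_type, ite_mul,
    zero_mul, sum_ite_irrel, sum_const_zero, sum_ite_eq, mem_univ, if_true, mul_sum]
  exact sum_congr rfl fun k _ => by ring

theorem stack_transpose_mul_blockDiagonalFst_mul_stack [DecidableEq ι] (w : ι → R)
    (M B N : ι → Matrix n n R) :
    (stack w M)ᵀ * blockDiagonalFst B * stack w N = ∑ e, w e ^ 2 • ((M e)ᵀ * B e * N e) := by
  simp only [Matrix.mul_assoc, blockDiagonalFst_mul_stack, stack_transpose_mul_stack]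

end

section

variable {m n R : Type*} [Fintype m] [Fintype n] [DecidableEq n] [CommRing R]

theorem transpose_mul_sandwich_mul_of_gram_eq {U V I : Matrix m n R} {D : Matrix m m R}
    {P Q : Matrix n n R} {c : R} (hIV : Iᵀ * V = P) (hVI : Vᵀ * I = P) (hII : Iᵀ * I = c • 1)
    (hUDU : Uᵀ * D * U = Q) (hUDI : Uᵀ * D * I = c • 1) (hIDU : Iᵀ * D * U = c • 1)
    (hIDI : Iᵀ * D * I = P) :
    Iᵀ * ((V * Uᵀ - I * Iᵀ) * D * (U * Vᵀ - I * Iᵀ)) * I = P * (Q * P - c ^ 2 • 1) := by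
  have hleft : Iᵀ * (V * Uᵀ - I * Iᵀ) = P * Uᵀ - c • Iᵀ := by
    rw [Matrix.mul_sub, ← Matrix.mul_assoc, ← Matrix.mul_assoc, hIV, hII, Matrix.smul_mul,
      Matrix.one_mul]
  have hright : (U * Vᵀ - I * Iᵀ) * I = U * P - c • I := by
    rw [Matrix.sub_mul, Matrix.mul_assoc, Matrix.mul_assoc, hVI, hII, Matrix.mul_smul,
      Matrix.mul_one]
  calc Iᵀ * ((V * Uᵀ - I * Iᵀ) * D * (U * Vᵀ - I * Iᵀ)) * I
      = (P * Uᵀ - c • Iᵀ) * D * (U * P - c • I) := by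
        rw [Matrix.mul_assoc, Matrix.mul_assoc, hright, ← Matrix.mul_assoc, ← Matrix.mul_assoc,
          hleft]
    _ = P * (Uᵀ * D * U) * P - c • (P * (Uᵀ * D * I)) - c • (Iᵀ * D * U * P)
        + c ^ 2 • (Iᵀ * D * I) := by
      simp only [Matrix.sub_mul, Matrix.mul_sub, Matrix.smul_mul, Matrix.mul_smul, smul_sub,
        smul_smul, Matrix.mul_assoc, sq]
      abel
    _ = P * (Q * P - c ^ 2 • 1) := by
      rw [hUDU, hUDI, hIDU, hIDI]
      simp only [Matrix.mul_sub, Matrix.mul_smul, Matrix.smul_mul, Matrix.mul_one, Matrix.one_mul,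
        Matrix.mul_assoc]
      module

theorem nonsing_inv_mul_mul_transpose_mul_transpose_nonsing_inv {A : Matrix n n R}
    (hA : IsUnit A) (B : Matrix n n R) : A⁻¹ * (B * Aᵀ) * A⁻¹ᵀ = A⁻¹ * B := by
  rw [transpose_nonsing_inv, ← Matrix.mul_assoc,
    mul_nonsing_inv_cancel_right _ _ (isUnit_det_transpose _ ((isUnit_iff_isUnit_det A).mp hA))]

end

end Matrix

theorem kl_regression_conditional_covariance_general {D E : ℕ}
    (S : Fin E → Matrix (Fin D) (Fin D) ℝ) (sig : Fin E → ℝ)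
    (hS : ∀ e, (S e).PosDef)
    (U Vm II : Matrix (Fin E × Fin D) (Fin D) ℝ)
    (hU : U = Matrix.of fun p j => (sig p.1)⁻¹ * S p.1 p.2 j)
    (hV : Vm = Matrix.of fun p j => (sig p.1)⁻¹ * (S p.1)⁻¹ p.2 j)
    (hII : II = Matrix.of fun p j => (sig p.1)⁻¹ * (1 : Matrix (Fin D) (Fin D) ℝ) p.2 j)
    (Dblk : Matrix (Fin E × Fin D) (Fin E × Fin D) ℝ)
    (hDblk : Dblk = Matrix.of fun p q => if p.1 = q.1 then (S p.1)⁻¹ p.2 q.2 else 0)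
    (A : Matrix (Fin E × Fin D) (Fin E × Fin D) ℝ)
    (hA : A = (Vm * Uᵀ - II * IIᵀ) * Dblk * (U * Vmᵀ - II * IIᵀ))
    (Sbeta : Matrix (Fin D) (Fin D) ℝ)
    (hSbeta : Sbeta = (∑ e, ((sig e) ^ 2)⁻¹ • (S e)⁻¹) * (∑ e, ((sig e) ^ 2)⁻¹ • S e)
      - ((∑ e, ((sig e) ^ 2)⁻¹) ^ 2) • (1 : Matrix (Fin D) (Fin D) ℝ))
    (hinv : IsUnit Sbeta) :
    IIᵀ * A * II = (∑ e, ((sig e) ^ 2)⁻¹ • (S e)⁻¹) * Sbetaᵀ ∧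
    (∀ n : ℕ, 0 < n →
      ((n : ℝ))⁻¹ • (Sbeta⁻¹ * (IIᵀ * A * II) * (Sbeta⁻¹)ᵀ) =
        ((n : ℝ))⁻¹ • (Sbeta⁻¹ * ∑ e, ((sig e) ^ 2)⁻¹ • (S e)⁻¹)) := by
  set w : Fin E → ℝ := fun e => (sig e)⁻¹
  set P := ∑ e, ((sig e) ^ 2)⁻¹ • (S e)⁻¹
  set Q := ∑ e, ((sig e) ^ 2)⁻¹ • S e
  set c := ∑ e, ((sig e) ^ 2)⁻¹
  replace hU : U = stack w S := hU
  replace hV : Vm = stack w fun e => (S e)⁻¹ := hV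
  replace hII : II = stack w fun _ => 1 := hII
  replace hDblk : Dblk = blockDiagonalFst fun e => (S e)⁻¹ := hDblk
  have hsymm e : (S e)ᵀ = S e := (isHermitian_iff_isSymm.mp (hS e).isHermitian).eq
  have hsymm_inv e : ((S e)⁻¹)ᵀ = (S e)⁻¹ := (isHermitian_iff_isSymm.mp (hS e).isHermitian).inv.eq
  have hdet e : IsUnit (S e).det := (isUnit_iff_isUnit_det _).mp (hS e).isUnit
  have hSbetaT : Sbetaᵀ = Q * P - c ^ 2 • 1 := by
    simp only [hSbeta, transpose_sub, transpose_mul, transpose_smul, transpose_one, P, Q,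
      transpose_sum, hsymm, hsymm_inv]
  have key : IIᵀ * A * II = P * Sbetaᵀ := by
    rw [hA, hSbetaT]
    apply transpose_mul_sandwich_mul_of_gram_eq <;>
      simp only [hU, hV, hII, hDblk, stack_transpose_mul_stack,
        stack_transpose_mul_blockDiagonalFst_mul_stack, w, inv_pow, hsymm, hsymm_inv,
        transpose_one, Matrix.one_mul, Matrix.mul_one, mul_nonsing_inv _ (hdet _),
        nonsing_inv_mul _ (hdet _), P, Q, c, sum_smul]
  refine ⟨key, fun n _ => ?_⟩
  rw [key, nonsing_inv_mul_mul_transpose_mul_transpose_nonsing_inv hinv]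

/-- Matrix-algebra identity behind the conditional covariance of the KL
regression estimator: with stacked matrices `𝕌, 𝕍, 𝕀` (blocks `Σ_e/σ_e`,
`Σ_e⁻¹/σ_e`, `I/σ_e`) and `A = (𝕍𝕌ᵀ − 𝕀𝕀ᵀ) diag(Σ_e⁻¹) (𝕌𝕍ᵀ − 𝕀𝕀ᵀ)`, one has
`𝕀ᵀA𝕀 = (Σ_e Σ_e⁻¹/σ_e²) S_βᵀ`; consequently, with `n` samples per
environment, the conditional covariance `V = (1/n) S_β⁻¹ 𝕀ᵀA𝕀 S_β⁻ᵀ` equals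
`(1/n) S_β⁻¹ (Σ_e Σ_e⁻¹/σ_e²)`. -/
theorem kl_regression_conditional_covariance {D E : ℕ} (hE : 1 ≤ E)
    (S : Fin E → Matrix (Fin D) (Fin D) ℝ) (sig : Fin E → ℝ)
    (hS : ∀ e, (S e).PosDef) (hsig : ∀ e, 0 < sig e)
    (U Vm II : Matrix (Fin E × Fin D) (Fin D) ℝ)
    (hU : U = Matrix.of fun p j => (sig p.1)⁻¹ * S p.1 p.2 j)
    (hV : Vm = Matrix.of fun p j => (sig p.1)⁻¹ * (S p.1)⁻¹ p.2 j)
    (hII : II = Matrix.of fun p j => (sig p.1)⁻¹ * (1 : Matrix (Fin D) (Fin D) ℝ) p.2 j)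
    (Dblk : Matrix (Fin E × Fin D) (Fin E × Fin D) ℝ)
    (hDblk : Dblk = Matrix.of fun p q => if p.1 = q.1 then (S p.1)⁻¹ p.2 q.2 else 0)
    (A : Matrix (Fin E × Fin D) (Fin E × Fin D) ℝ)
    (hA : A = (Vm * Uᵀ - II * IIᵀ) * Dblk * (U * Vmᵀ - II * IIᵀ))
    (Sbeta : Matrix (Fin D) (Fin D) ℝ)
    (hSbeta : Sbeta = (∑ e, ((sig e) ^ 2)⁻¹ • (S e)⁻¹) * (∑ e, ((sig e) ^ 2)⁻¹ • S e)
      - ((∑ e, ((sig e) ^ 2)⁻¹) ^ 2) • (1 : Matrix (Fin D) (Fin D) ℝ))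
    (hinv : IsUnit Sbeta) :
    IIᵀ * A * II = (∑ e, ((sig e) ^ 2)⁻¹ • (S e)⁻¹) * Sbetaᵀ ∧
    (∀ n : ℕ, 0 < n →
      ((n : ℝ))⁻¹ • (Sbeta⁻¹ * (IIᵀ * A * II) * (Sbeta⁻¹)ᵀ) =
        ((n : ℝ))⁻¹ • (Sbeta⁻¹ * ∑ e, ((sig e) ^ 2)⁻¹ • (S e)⁻¹)) :=
  kl_regression_conditional_covariance_general S sig hS U Vm II hU hV hII Dblk hDblk A hA Sbeta
    hSbeta hinv
end

section
/- Let Σ₁,…,Σ_E be D×D symmetric positive definite matrices and σ_e² > 0. Define A = (Σ_e Σ_e/σ_e²) − (Σ_e 1/σ_e²)²(Σ_e Σ_e⁻¹/σ_e²)⁻¹. Then A is symmetric positive semidefinite. -/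
/-!
With `H = ∑ wᵢ Sᵢ⁻¹` and `c = ∑ wᵢ`, expanding gives
`∑ wᵢ (H - c Sᵢ⁻¹) Sᵢ (H - c Sᵢ⁻¹) = H M H - c² H` for `M = ∑ wᵢ Sᵢ`, a sum of congruences of
positive matrices, so `H M H - c² H = H (M - c² H⁻¹) H` is positive semidefinite and so is
`M - c² H⁻¹` when `H` is invertible. When `H` is singular, `H⁻¹ = 0` by convention and the claim
is `M ⪰ 0`.
-/

open Finset
open scoped ComplexOrder

namespace Matrix

variable {𝕜 n ι : Type*} [Fintype n] [DecidableEq n] [Fintype ι]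

section Field

variable [Field 𝕜]

theorem sub_smul_inv_mul_mul_sub_smul_inv_s17 {S : Matrix n n 𝕜} (hS : IsUnit S) (H : Matrix n n 𝕜)
    (c : 𝕜) :
    (H - c • S⁻¹) * S * (H - c • S⁻¹) = H * S * H - (2 * c) • H + c ^ 2 • S⁻¹ := by
  have hS' := (isUnit_iff_isUnit_det S).1 hS
  simp only [sub_mul, mul_sub, Matrix.smul_mul, Matrix.mul_smul, Matrix.mul_assoc,
    mul_nonsing_inv _ hS', nonsing_inv_mul _ hS', Matrix.mul_one, Matrix.one_mul]
  module

theorem sum_smul_sub_smul_inv_mul_mul_sub_smul_inv_s17 {S : ι → Matrix n n 𝕜}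
    (hS : ∀ i, IsUnit (S i)) {w : ι → 𝕜} {c : 𝕜} {H : Matrix n n 𝕜} (hc : ∑ i, w i = c)
    (hH : ∑ i, w i • (S i)⁻¹ = H) :
    ∑ i, w i • ((H - c • (S i)⁻¹) * S i * (H - c • (S i)⁻¹)) =
      H * (∑ i, w i • S i) * H - c ^ 2 • H := by
  have hSH : ∑ i, w i • (H * S i * H) = H * (∑ i, w i • S i) * H := by
    simp only [Matrix.mul_sum, Matrix.sum_mul, Matrix.mul_smul, Matrix.smul_mul]
  have hcH : ∑ i, w i • (2 * c) • H = (2 * c ^ 2) • H := by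
    rw [← sum_smul, hc, smul_smul]
    ring_nf
  have hcS : ∑ i, w i • c ^ 2 • (S i)⁻¹ = c ^ 2 • H := by
    simp only [smul_comm (w _) (c ^ 2), ← Finset.smul_sum, hH]
  simp only [sub_smul_inv_mul_mul_sub_smul_inv_s17 (hS _), smul_add, smul_sub, sum_add_distrib,
    sum_sub_distrib, hSH, hcH, hcS]
  module

theorem mul_sub_smul_inv_mul {H : Matrix n n 𝕜} (hH : IsUnit H.det) (M : Matrix n n 𝕜) (a : 𝕜) :
    H * (M - a • H⁻¹) * H = H * M * H - a • H := by
  rw [mul_sub, sub_mul, Matrix.mul_smul, mul_nonsing_inv _ hH, Matrix.smul_mul, Matrix.one_mul]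

end Field

variable [RCLike 𝕜] {S : ι → Matrix n n 𝕜} {w : ι → 𝕜}

theorem posSemidef_sum_smul_inv (hS : ∀ i, (S i).PosDef) (hw : ∀ i, 0 ≤ w i) :
    (∑ i, w i • (S i)⁻¹).PosSemidef :=
  posSemidef_sum _ fun i _ => (hS i).inv.posSemidef.smul (hw i)

theorem posSemidef_mul_sum_smul_mul_sub_sq_smul (hS : ∀ i, (S i).PosDef) (hw : ∀ i, 0 ≤ w i)
    {c : 𝕜} {H : Matrix n n 𝕜} (hc : ∑ i, w i = c) (hH : ∑ i, w i • (S i)⁻¹ = H) :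
    (H * (∑ i, w i • S i) * H - c ^ 2 • H).PosSemidef := by
  rw [← sum_smul_sub_smul_inv_mul_mul_sub_smul_inv_s17 (fun i => (hS i).isUnit) hc hH]
  refine posSemidef_sum _ fun i _ => PosSemidef.smul ?_ (hw i)
  have hc0 : 0 ≤ c := hc ▸ sum_nonneg fun i _ => hw i
  have hP : (H - c • (S i)⁻¹).IsHermitian :=
    (hH ▸ posSemidef_sum_smul_inv hS hw).isHermitian.sub <|
      IsSelfAdjoint.smul (.of_nonneg hc0) (hS i).inv.isHermitian
  simpa only [hP.eq] using (hS i).posSemidef.conjTranspose_mul_mul_same (H - c • (S i)⁻¹)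

theorem posSemidef_sum_smul_sub_sq_smul_inv (hS : ∀ i, (S i).PosDef) (hw : ∀ i, 0 ≤ w i) :
    ((∑ i, w i • S i) - (∑ i, w i) ^ 2 • (∑ i, w i • (S i)⁻¹)⁻¹).PosSemidef := by
  set H := ∑ i, w i • (S i)⁻¹ with hH
  by_cases hHu : IsUnit H.det
  · rw [← IsUnit.posSemidef_star_left_conjugate_iff ((isUnit_iff_isUnit_det H).2 hHu),
      star_eq_conjTranspose, (posSemidef_sum_smul_inv hS hw).1, mul_sub_smul_inv_mul hHu]
    exact posSemidef_mul_sum_smul_mul_sub_sq_smul hS hw rfl hH.symm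
  · simpa [nonsing_inv_apply_not_isUnit _ hHu] using
      posSemidef_sum _ fun i _ => (hS i).posSemidef.smul (hw i)

end Matrix

theorem kl_regression_A_posSemidef_general {D E : ℕ}
    (S : Fin E → Matrix (Fin D) (Fin D) ℝ) (s2 : Fin E → ℝ)
    (hS : ∀ e, (S e).PosDef) (hs2 : ∀ e, 0 < s2 e) :
    ((∑ e, (s2 e)⁻¹ • S e)
      - ((∑ e, (s2 e)⁻¹) ^ 2) • (∑ e, (s2 e)⁻¹ • (S e)⁻¹)⁻¹).PosSemidef :=
  Matrix.posSemidef_sum_smul_sub_sq_smul_inv hS fun e => (inv_pos.2 (hs2 e)).le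

/-- Weighted matrix arithmetic–harmonic mean inequality:
`A = (Σ_e Σ_e/σ_e²) − (Σ_e 1/σ_e²)² (Σ_e Σ_e⁻¹/σ_e²)⁻¹` is symmetric
positive semidefinite. -/
theorem kl_regression_A_posSemidef {D E : ℕ} (hE : 1 ≤ E)
    (S : Fin E → Matrix (Fin D) (Fin D) ℝ) (s2 : Fin E → ℝ)
    (hS : ∀ e, (S e).PosDef) (hs2 : ∀ e, 0 < s2 e) :
    ((∑ e, (s2 e)⁻¹ • S e)
      - ((∑ e, (s2 e)⁻¹) ^ 2) • (∑ e, (s2 e)⁻¹ • (S e)⁻¹)⁻¹).PosSemidef :=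
  kl_regression_A_posSemidef_general S s2 hS hs2
end
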